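/- arXiv:1710.11218 — 11 statements merged into one kernel-verified Lean document; each statement's English description precedes it below -/
import Mathlib

section
/- Suppose the cyclic group C₂ of order 2 acts by automorphisms on a finite abelian group G with |G^{C₂}| ≤ 2, where G^{C₂} is the subgroup of fixed points. Then the generator x of C₂ acts by inversion on the subgroup G_{2'} of elements of odd order. -/
/-! If `φ` is an involutive automorphism of the abelian group `G`, then `g * φ g` is fixed by `φ`,
and its order divides the order of `g`. For `g` of odd order it is thus an element of odd order
in a group of order at most `2`, hence trivial, i.e. `φ g = g⁻¹`. -/

theorem eq_one_of_odd_orderOf_of_card_le_two {H : Type*} [Group H] [Finite H]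
    (hH : Nat.card H ≤ 2) {x : H} (hx : Odd (orderOf x)) : x = 1 := by
  have hle : orderOf x ≤ 2 := (Nat.le_of_dvd Nat.card_pos (orderOf_dvd_natCard x)).trans hH
  obtain ⟨k, hk⟩ := hx
  exact orderOf_eq_one_iff.mp (by omega)

theorem orderOf_mul_map_dvd {G : Type*} [CommMonoid G] (φ : G →* G) (g : G) :
    orderOf (g * φ g) ∣ orderOf g :=
  ((Commute.all g (φ g)).orderOf_mul_dvd_lcm).trans
    (Nat.lcm_dvd dvd_rfl (orderOf_map_dvd φ g))

theorem mul_map_mem_eqLocus_id {G : Type*} [CommGroup G] (φ : G →* G)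
    (hinvol : ∀ g : G, φ (φ g) = g) (g : G) :
    g * φ g ∈ φ.eqLocus (MonoidHom.id G) := by
  change φ (g * φ g) = g * φ g
  rw [map_mul, hinvol, mul_comm]

/-- If `C₂` acts by automorphisms on a finite abelian group `G` with at most two
fixed points, then the generator acts by inversion on the elements of odd order. -/
theorem c2_action_inverts_odd_part (G : Type*) [CommGroup G] [Finite G]
    (φ : G ≃* G) (hinvol : ∀ g : G, φ (φ g) = g)
    (hfix : Nat.card {g : G // φ g = g} ≤ 2) :
    ∀ g : G, Odd (orderOf g) → φ g = g⁻¹ := by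
  intro g hg
  let F : Subgroup G := φ.toMonoidHom.eqLocus (MonoidHom.id G)
  let y : F := ⟨g * φ g, mul_map_mem_eqLocus_id φ.toMonoidHom hinvol g⟩
  have hy_odd : Odd (orderOf y) := by
    rw [← Subgroup.orderOf_coe]
    exact hg.of_dvd_nat (orderOf_mul_map_dvd φ.toMonoidHom g)
  -- `F` unfolds to `{g // φ g = g}`, so `hfix` bounds its order.
  have hy : y = 1 := eq_one_of_odd_orderOf_of_card_le_two (H := F) hfix hy_odd
  exact eq_inv_of_mul_eq_one_right (congrArg Subtype.val hy)
end

section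
/- Suppose C₂ = ⟨x⟩ acts by automorphisms on a finite abelian 2-group P that is cyclic of order 2ⁿ, and the fixed-point subgroup has order at most 2. Then for a generator g of P, either ˣg = g^{2ⁿ−1} (inversion) or ˣg = g^{2^{n−1}−1}. -/
/-!
Write `φ g = g ^ k`. Since `φ` is an involution, `k ^ 2 ≡ 1 [ZMOD 2 ^ n]`. If `4 ∣ k - 1` and
`n ≥ 2`, then `φ` fixes the element `g ^ (2 ^ (n - 2))` of order `4`, hence at least four points;
so `k ≡ 3 [ZMOD 4]`. Then `k - 1` is twice an odd number, and `2 ^ n ∣ (k - 1) (k + 1)` forces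
`2 ^ (n - 1) ∣ k + 1`, leaving exactly the two residues `-1` and `2 ^ (n - 1) - 1` mod `2 ^ n`.
-/

namespace Int

theorem two_pow_pred_dvd_add_one_of_sq_modEq_one {n : ℕ} {k : ℤ} (hk : k ^ 2 ≡ 1 [ZMOD 2 ^ n])
    (h4 : ¬ 4 ∣ k - 1) : 2 ^ (n - 1) ∣ k + 1 := by
  obtain _ | n := n
  · simp
  have hdvd : 2 * 2 ^ n ∣ (k - 1) * (k + 1) := by
    rw [← pow_succ']
    exact hk.symm.dvd.trans ⟨1, by ring⟩
  have hodd : Odd k := by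
    have : k ^ 2 ≡ 1 [ZMOD 2] := hk.of_dvd (dvd_pow_self 2 n.succ_ne_zero)
    exact (odd_pow.mp (odd_iff.mpr this)).resolve_right two_ne_zero
  obtain ⟨j, hj⟩ : ∃ j, k = 4 * j + 3 := ⟨k / 4, by rw [odd_iff] at hodd; omega⟩
  have hcop : IsCoprime (2 ^ n : ℤ) (2 * j + 1) := .pow_left ⟨-j, 1, by ring⟩
  rw [show k - 1 = 2 * (2 * j + 1) by omega, mul_assoc] at hdvd
  exact hcop.dvd_of_dvd_mul_left ((mul_dvd_mul_iff_left two_ne_zero).mp hdvd)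

theorem modEq_two_pow_sub_one_or_of_dvd {n : ℕ} {k : ℤ} (h : 2 ^ (n - 1) ∣ k + 1) :
    k ≡ 2 ^ n - 1 [ZMOD 2 ^ n] ∨ k ≡ 2 ^ (n - 1) - 1 [ZMOD 2 ^ n] := by
  obtain _ | n := n
  · simp [modEq_one]
  rw [Nat.add_sub_cancel] at h ⊢
  obtain ⟨t, ht⟩ := h
  obtain ⟨s, rfl | rfl⟩ := even_or_odd' t
  · exact .inl (modEq_iff_dvd.mpr ⟨1 - s, by rw [pow_succ]; linear_combination -ht⟩)
  · exact .inr (modEq_iff_dvd.mpr ⟨-s, by rw [pow_succ]; linear_combination -ht⟩)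

end Int

namespace MulEquiv

variable {P : Type*} [Group P]

theorem sq_modEq_one_of_apply_apply (φ : P ≃* P) {g : P} {k : ℤ} (hinvol : φ (φ g) = g)
    (hk : φ g = g ^ k) : k ^ 2 ≡ 1 [ZMOD orderOf g] := by
  rw [← zpow_eq_zpow_iff_modEq, zpow_one]
  conv_rhs => rw [← hinvol, hk, map_zpow, hk, ← zpow_mul, ← sq]

theorem orderOf_le_card_fixed [Finite P] (φ : P ≃* P) {h : P} (hh : φ h = h) :
    orderOf h ≤ Nat.card {p // φ p = p} := by
  rw [← Nat.card_zpowers]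
  exact Nat.card_mono (Set.toFinite {p | φ p = p}) fun p ⟨m, hm⟩ => by
    rw [← hm]
    change φ (h ^ m) = h ^ m
    rw [map_zpow, hh]

/-- `φ` fixes `g ^ (orderOf g / d)`, an element of order `d`. -/
theorem le_card_fixed_of_dvd_sub_one [Finite P] (φ : P ≃* P) {g : P} {k : ℤ}
    (hk : φ g = g ^ k) {d : ℕ} (hd : d ∣ orderOf g) (hdk : (d : ℤ) ∣ k - 1) :
    d ≤ Nat.card {p // φ p = p} := by
  set h := g ^ (orderOf g / d)
  have hord : orderOf h = d := orderOf_pow_orderOf_div (orderOf_pos g).ne' hd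
  refine hord ▸ φ.orderOf_le_card_fixed ?_
  calc φ h = h ^ k := by
        rw [map_pow, hk, ← zpow_natCast, ← zpow_mul, mul_comm, zpow_mul, zpow_natCast]
    _ = h ^ (1 : ℤ) := zpow_eq_zpow_iff_modEq.mpr (hord ▸ (Int.modEq_iff_dvd.mpr hdk).symm)
    _ = h := zpow_one h

end MulEquiv

theorem c2_action_on_cyclic_two_group_general (P : Type*) [Group P] [Finite P]
    (n : ℕ) (hcard : Nat.card P = 2 ^ n)
    (g : P) (hg : ∀ p : P, p ∈ Subgroup.zpowers g)
    (φ : P ≃* P) (hinvol : ∀ p : P, φ (φ p) = p)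
    (hfix : Nat.card {p : P // φ p = p} ≤ 2) :
    φ g = g ^ (2 ^ n - 1) ∨ φ g = g ^ (2 ^ (n - 1) - 1) := by
  have hord : orderOf g = 2 ^ n := by rw [orderOf_eq_card_of_forall_mem_zpowers hg, hcard]
  obtain ⟨k, hk⟩ := Subgroup.mem_zpowers_iff.mp (hg (φ g))
  have hsq := φ.sq_modEq_one_of_apply_apply (hinvol g) hk.symm
  rw [hord, Nat.cast_pow, Nat.cast_two] at hsq
  have hdvd : 2 ^ (n - 1) ∣ k + 1 := by
    rcases lt_or_ge n 2 with hn | hn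
    · simp [Nat.sub_eq_zero_of_le (by omega : n ≤ 1)]
    refine Int.two_pow_pred_dvd_add_one_of_sq_modEq_one hsq fun h4 => ?_
    have := φ.le_card_fixed_of_dvd_sub_one hk.symm (d := 4)
      (hord ▸ (pow_dvd_pow 2 hn : 2 ^ 2 ∣ 2 ^ n)) h4
    omega
  simp only [← hk, ← zpow_natCast, zpow_eq_zpow_iff_modEq, hord,
    Nat.cast_sub Nat.one_le_two_pow]
  push_cast
  exact Int.modEq_two_pow_sub_one_or_of_dvd hdvd

/-- If `C₂` acts by automorphisms on a cyclic group `P` of order `2 ^ n` with at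
most two fixed points, then on a generator `g` the action is `g ↦ g ^ (2 ^ n - 1)`
(inversion) or `g ↦ g ^ (2 ^ (n - 1) - 1)`. -/
theorem c2_action_on_cyclic_two_group (P : Type*) [Group P] [Finite P]
    (n : ℕ) (hn : 1 ≤ n) (hcard : Nat.card P = 2 ^ n)
    (g : P) (hg : ∀ p : P, p ∈ Subgroup.zpowers g)
    (φ : P ≃* P) (hinvol : ∀ p : P, φ (φ p) = p)
    (hfix : Nat.card {p : P // φ p = p} ≤ 2) :
    φ g = g ^ (2 ^ n - 1) ∨ φ g = g ^ (2 ^ (n - 1) - 1) :=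
  c2_action_on_cyclic_two_group_general P n hcard g hg φ hinvol hfix
end

section
/- Suppose C₂ acts by automorphisms on a finite abelian 2-group P with |P^{C₂}| ≤ 2 and P not cyclic. Then P is isomorphic to C_{2ⁿ} × C₂ for some n ≥ 1. In particular, the subgroup of P generated by elements of order 2 has rank at most 2. -/
/-!
Let `N x = x * φ x`. Its image consists of fixed points of `φ`, so `K = ker N` has index at most
`2`. On `K` the automorphism `φ` is inversion, so every involution of `K` is fixed; thus `K` has at
most one involution and, being an abelian `2`-group, is cyclic. As `P` is not cyclic, some
involution `t` of `P` lies outside `K`; then `K` has index exactly `2` and `P = K × ⟨t⟩`.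
Counting square roots of `1` factorwise in `C_{2^n} × C₂` gives at most `2 * 2` of them.
-/

theorem Subgroup.card_pow_eq_one_le {G : Type*} [Group G] [Finite G] (H : Subgroup G) (n : ℕ) :
    Nat.card {x : H // x ^ n = 1} ≤ Nat.card {x : G // x ^ n = 1} :=
  Nat.card_le_card_of_injective (fun x => ⟨x.1, by simpa using congrArg Subtype.val x.2⟩)
    fun _ _ h => Subtype.ext (Subtype.ext (congrArg Subtype.val h :))

theorem Subgroup.card_pow_eq_one_eq_of_forall_mem {G : Type*} [Group G] {H : Subgroup G} {n : ℕ}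
    (h : ∀ x : G, x ^ n = 1 → x ∈ H) :
    Nat.card {x : H // x ^ n = 1} = Nat.card {x : G // x ^ n = 1} :=
  Nat.card_congr
    { toFun x := ⟨x.1, by simpa using congrArg Subtype.val x.2⟩
      invFun x := ⟨⟨x.1, h x.1 x.2⟩, Subtype.ext x.2⟩ }

theorem MulEquiv.card_pow_eq_one_congr {A B : Type*} [Monoid A] [Monoid B] (e : A ≃* B)
    (n : ℕ) :
    Nat.card {a : A // a ^ n = 1} = Nat.card {b : B // b ^ n = 1} :=
  Nat.card_congr (e.toEquiv.subtypeEquiv fun _ => by simp [← map_pow])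

theorem Nat.card_prod_pow_eq_one {A B : Type*} [Monoid A] [Monoid B] (n : ℕ) :
    Nat.card {x : A × B // x ^ n = 1} =
      Nat.card {a : A // a ^ n = 1} * Nat.card {b : B // b ^ n = 1} := by
  rw [← Nat.card_prod]
  exact Nat.card_congr <| (Equiv.subtypeEquivRight fun _ => Prod.ext_iff).trans
    (Equiv.subtypeProdEquivProd (p := fun a : A => a ^ n = 1) (q := fun b : B => b ^ n = 1))

theorem IsCyclic.card_pow_eq_one {A : Type*} [CommGroup A] [IsCyclic A] [Finite A] (n : ℕ) :
    Nat.card {a : A // a ^ n = 1} = (Nat.card A).gcd n :=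
  IsCyclic.card_powMonoidHom_ker A n

/-- The `p`-th power map has kernel of order at most `p`, so `|G| ≤ p * |G^p|`; by induction `G^p`
is cyclic, and any `p`-th root of a generator of `G^p` has order `p * |G^p|`. -/
theorem IsPGroup.isCyclic_of_card_pow_eq_one_le {p : ℕ} [Fact p.Prime] {G : Type*}
    [CommGroup G] [Finite G] (hG : IsPGroup p G) (h : Nat.card {x : G // x ^ p = 1} ≤ p) :
    IsCyclic G := by
  induction hn : Nat.card G using Nat.strong_induction_on generalizing G with
  | _ n ih =>
  set f : G →* G := powMonoidHom p
  have hker : Nat.card f.ker ≤ p := h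
  have hcard : Nat.card f.ker * Nat.card f.range = Nat.card G := by
    rw [← Subgroup.index_ker, Subgroup.card_mul_index]
  rcases eq_or_ne (Nat.card f.range) 1 with hr | hr
  · refine isCyclic_of_card_dvd_prime (p := p) ?_
    rw [hr, mul_one] at hcard
    rcases hG.card_eq_or_dvd with h1 | hp
    · exact h1 ▸ one_dvd p
    · exact (le_antisymm (hcard ▸ hker) (Nat.le_of_dvd Nat.card_pos hp)) ▸ dvd_rfl
  have hG1 : Nat.card G ≠ 1 := fun h1 => hr (Nat.eq_one_of_mul_eq_one_left (hcard.trans h1))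
  obtain ⟨z, hz⟩ := exists_prime_orderOf_dvd_card' p (hG.card_eq_or_dvd.resolve_left hG1)
  have hz_ker : z ∈ f.ker := by
    rw [MonoidHom.mem_ker, powMonoidHom_apply, ← hz, pow_orderOf_eq_one]
  have hker_nontrivial : 1 < Nat.card f.ker := by
    rw [Subgroup.one_lt_card_iff_ne_bot]
    intro hbot
    rw [hbot, Subgroup.mem_bot, ← orderOf_eq_one_iff, hz] at hz_ker
    exact (Fact.out : p.Prime).one_lt.ne' hz_ker
  have hrange_lt : Nat.card f.range < n := by
    rw [← hn, ← hcard]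
    exact lt_mul_of_one_lt_left Nat.card_pos hker_nontrivial
  have : IsCyclic f.range := ih _ hrange_lt (hG.to_subgroup _)
    ((f.range.card_pow_eq_one_le p).trans h) rfl
  obtain ⟨y, hy⟩ := IsCyclic.exists_ofOrder_eq_natCard (α := f.range)
  obtain ⟨x, hxy⟩ := y.2
  have hx : x ≠ 1 := by
    rintro rfl
    rw [map_one, eq_comm, OneMemClass.coe_eq_one, ← orderOf_eq_one_iff, hy] at hxy
    exact hr hxy
  have hpx : p ∣ orderOf x := hG.dvd_orderOf hx
  have horder : orderOf x = p * Nat.card f.range := by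
    rw [← hy, ← Subgroup.orderOf_coe, ← hxy, powMonoidHom_apply,
      orderOf_pow' x (Fact.out : p.Prime).ne_zero, Nat.gcd_eq_right hpx, Nat.mul_div_cancel' hpx]
  refine isCyclic_of_card_le_orderOf x ?_
  rw [horder, ← hcard]
  exact Nat.mul_le_mul_right _ hker

theorem Subgroup.disjoint_zpowers_of_orderOf_eq_two {G : Type*} [Group G] {H : Subgroup G}
    {t : G} (ht : t ∉ H) (ht2 : orderOf t = 2) : Disjoint H (zpowers t) := by
  rw [Subgroup.disjoint_def]
  intro x hxH hx
  obtain ⟨k, rfl⟩ := mem_zpowers_iff.mp hx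
  rw [← zpow_mod_orderOf, ht2, Nat.cast_ofNat] at hxH ⊢
  rcases Int.emod_two_eq_zero_or_one k with h | h
  · rw [h, zpow_zero]
  · rw [h, zpow_one] at hxH
    exact absurd hxH ht

theorem Subgroup.isComplement'_zpowers_of_index_eq_two {G : Type*} [Group G] [Finite G]
    {H : Subgroup G} (hH : H.index = 2) {t : G} (ht : t ∉ H) (ht2 : orderOf t = 2) :
    H.IsComplement' (zpowers t) :=
  isComplement'_of_card_mul_and_disjoint (by rw [Nat.card_zpowers, ht2, ← hH, card_mul_index])
    (disjoint_zpowers_of_orderOf_eq_two ht ht2)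

noncomputable def Subgroup.IsComplement'.prodMulEquiv {G : Type*} [CommGroup G]
    {H K : Subgroup G} (h : H.IsComplement' K) : H × K ≃* G :=
  MulEquiv.ofBijective (H.subtype.coprod K.subtype) h

theorem Subgroup.nonempty_mulEquiv_prod_zmod_two_of_index_eq_two {G : Type*} [CommGroup G]
    [Finite G] {H : Subgroup G} (hH : H.index = 2) {t : G} (ht : t ∉ H) (ht2 : orderOf t = 2) :
    Nonempty (G ≃* H × Multiplicative (ZMod 2)) := by
  have : Fact (Nat.Prime 2) := ⟨Nat.prime_two⟩
  have eT : zpowers t ≃* Multiplicative (ZMod 2) :=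
    mulEquivOfPrimeCardEq (by rw [Nat.card_zpowers, ht2]) (by simp)
  exact ⟨(isComplement'_zpowers_of_index_eq_two hH ht ht2).prodMulEquiv.symm.trans
    ((MulEquiv.refl H).prodCongr eT)⟩

namespace MonoidHom

variable {G : Type*} [CommGroup G] (f : G →* G)

def involutionNorm : G →* G := MonoidHom.id G * f

@[simp]
theorem involutionNorm_apply (x : G) : f.involutionNorm x = x * f x := rfl

theorem mem_ker_involutionNorm {x : G} : x ∈ f.involutionNorm.ker ↔ f x = x⁻¹ := by
  rw [mem_ker, involutionNorm_apply, mul_eq_one_iff_inv_eq, eq_comm]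

theorem apply_involutionNorm (hf : ∀ x, f (f x) = x) (x : G) :
    f (f.involutionNorm x) = f.involutionNorm x := by
  rw [involutionNorm_apply, map_mul, hf, mul_comm]

theorem index_ker_involutionNorm_le [Finite G] (hf : ∀ x, f (f x) = x) :
    f.involutionNorm.ker.index ≤ Nat.card {x : G // f x = x} := by
  rw [Subgroup.index_ker]
  refine Nat.card_le_card_of_injective (fun y => ⟨y, ?_⟩)
    fun _ _ h => Subtype.ext (congrArg Subtype.val h :)
  obtain ⟨x, hx⟩ := y.2
  rw [← hx, f.apply_involutionNorm hf]

theorem card_sq_eq_one_ker_involutionNorm_le [Finite G] :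
    Nat.card {x : f.involutionNorm.ker // x ^ 2 = 1} ≤ Nat.card {x : G // f x = x} := by
  refine Nat.card_le_card_of_injective
    (fun x : {x : f.involutionNorm.ker // x ^ 2 = 1} => ⟨x.1, ?_⟩)
    fun _ _ h => Subtype.ext (Subtype.ext (congrArg Subtype.val h :))
  have hx2 : (x.1 : G) ^ 2 = 1 := by simpa using congrArg Subtype.val x.2
  rw [(mem_ker_involutionNorm f).mp x.1.2, inv_eq_of_mul_eq_one_right (by rwa [← sq])]

end MonoidHom

/-- If `C₂` acts by automorphisms on a finite abelian `2`-group `P` which is not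
cyclic and has at most two fixed points, then `P ≅ C_{2^n} × C₂` for some `n ≥ 1`;
in particular the subgroup generated by the elements of order `2` has rank at
most `2`, i.e. at most `4` elements of order dividing `2`. -/
theorem c2_action_on_noncyclic_two_group (P : Type*) [CommGroup P] [Finite P]
    (hP : IsPGroup 2 P)
    (φ : P ≃* P) (hinvol : ∀ p : P, φ (φ p) = p)
    (hfix : Nat.card {p : P // φ p = p} ≤ 2)
    (hnc : ¬IsCyclic P) :
    (∃ n : ℕ, 1 ≤ n ∧
      Nonempty (P ≃* (Multiplicative (ZMod (2 ^ n)) × Multiplicative (ZMod 2)))) ∧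
    Nat.card {p : P // p * p = 1} ≤ 4 := by
  have : Fact (Nat.Prime 2) := ⟨Nat.prime_two⟩
  set f : P →* P := φ.toMonoidHom
  set K := f.involutionNorm.ker
  have hK : Nat.card {x : K // x ^ 2 = 1} ≤ 2 := f.card_sq_eq_one_ker_involutionNorm_le.trans hfix
  have hKcyc : IsCyclic K := (hP.to_subgroup K).isCyclic_of_card_pow_eq_one_le hK
  obtain ⟨t, ht2, htK⟩ : ∃ t, t ^ 2 = 1 ∧ t ∉ K := by
    by_contra! hall
    exact hnc <| hP.isCyclic_of_card_pow_eq_one_le <|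
      Subgroup.card_pow_eq_one_eq_of_forall_mem hall ▸ hK
  have ht : orderOf t = 2 := orderOf_eq_prime ht2 fun h => htK (h ▸ K.one_mem)
  have hindex : K.index = 2 :=
    le_antisymm ((f.index_ker_involutionNorm_le hinvol).trans hfix)
      (Subgroup.one_lt_index_of_ne_top fun h => htK (h ▸ Subgroup.mem_top t))
  obtain ⟨n, hn⟩ := IsPGroup.iff_card.mp (hP.to_subgroup K)
  have hn1 : 1 ≤ n := by
    refine Nat.one_le_iff_ne_zero.mpr fun h0 => hnc (isCyclic_of_prime_card (p := 2) ?_)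
    rw [← K.card_mul_index, hn, hindex, h0, pow_zero, one_mul]
  obtain ⟨e⟩ := K.nonempty_mulEquiv_prod_zmod_two_of_index_eq_two hindex htK ht
  let e' : P ≃* Multiplicative (ZMod (2 ^ n)) × Multiplicative (ZMod 2) :=
    e.trans ((hn ▸ zmodCyclicMulEquiv hKcyc).symm.prodCongr (MulEquiv.refl _))
  refine ⟨⟨n, hn1, ⟨e'⟩⟩, ?_⟩
  simp_rw [← sq]
  rw [e'.card_pow_eq_one_congr, Nat.card_prod_pow_eq_one, IsCyclic.card_pow_eq_one,
    IsCyclic.card_pow_eq_one]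
  exact Nat.mul_le_mul (Nat.gcd_le_right _ two_pos) (Nat.gcd_le_right _ two_pos)
end

section
/- Let G be a finite group whose center Z(G) has order greater than 2. Then the faithful part ∂B^×(G) of the unit group of the Burnside ring is trivial. In particular, if G is abelian with |G| > 2, then ∂B^×(G) is trivial. -/
open Pointwise

/-- Mark of the transitive `G`-set `G ⧸ K` at the subgroup `H`: the number of
`H`-fixed points of `G ⧸ K`. -/
noncomputable def burnsideMark (G : Type*) [Group G] (K H : Subgroup G) : ℤ :=
  Nat.card {x : G ⧸ K // ∀ h ∈ H, h • x = x}

/-- The Burnside ring of `G`, realized inside the ghost ring `Subgroup G → ℤ`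
as the subring generated by the marks of the transitive `G`-sets. -/
noncomputable def BurnsideRing (G : Type*) [Group G] : Subring (Subgroup G → ℤ) :=
  Subring.closure (Set.range (burnsideMark G))

/-- Ghost coordinates of a unit of the Burnside ring. -/
noncomputable def ghost {G : Type*} [Group G] (u : (BurnsideRing G)ˣ) : Subgroup G → ℤ :=
  (u.val : Subgroup G → ℤ)
/-- A unit of the Burnside ring is faithful iff its mark is `1` at every subgroup
containing a nontrivial normal subgroup of `G`. -/
def IsFaithfulUnit {G : Type*} [Group G] (u : (BurnsideRing G)ˣ) : Prop :=
  ∀ K : Subgroup G, (∃ M : Subgroup G, M.Normal ∧ M ≠ ⊥ ∧ M ≤ K) → ghost u K = 1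

/-!
Every element `f` of the Burnside ring is a difference of mark vectors of finite `G`-sets.
For a finite `G`-set `X` and a subgroup `K`, the center `Z` of `G` acts on the `K`-fixed points
`X^K`, and the `z`-fixed points of this action are `X^(K ⊔ ⟨z⟩)`; Burnside's lemma therefore gives
`|Z| ∣ ∑_{z ∈ Z} f(K ⊔ ⟨z⟩)`. If `f` is a faithful unit, every summand with `z ≠ 1` equals `1`,
so `|Z| ∣ f(K) - 1`. As `f(K) = ±1`, the value `-1` would force `|Z| ∣ 2`.
-/

universe u v

instance {M : Type*} [Monoid M] : MulAction M PEmpty.{v + 1} where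
  smul _ x := x.elim
  one_smul x := x.elim
  mul_smul _ _ x := x.elim

namespace Subgroup

variable {G : Type*} [Group G]

theorem normal_of_le_center {H : Subgroup G} (hH : H ≤ center G) : H.Normal :=
  ⟨fun n hn g => by rwa [mem_center_iff.mp (hH hn) g, mul_inv_cancel_right]⟩

theorem center_eq_top_of_comm (hcomm : ∀ a b : G, a * b = b * a) : center G = ⊤ :=
  (eq_top_iff' _).mpr fun x => mem_center_iff.mpr fun g => hcomm g x

end Subgroup

section Marks

variable (G : Type u) [Group G]

noncomputable def marks (X : Type*) [MulAction G X] : Subgroup G → ℤ :=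
  fun K => Nat.card {x : X // ∀ h ∈ K, h • x = x}

variable {G}

theorem marks_sum (X Y : Type*) [MulAction G X] [MulAction G Y] [Finite X] [Finite Y] :
    marks G (X ⊕ Y) = marks G X + marks G Y := by
  funext K
  have e : {c : X ⊕ Y // ∀ h ∈ K, h • c = c} ≃
      {x : X // ∀ h ∈ K, h • x = x} ⊕ {y : Y // ∀ h ∈ K, h • y = y} :=
    Equiv.subtypeSum.trans <| Equiv.sumCongr
      (Equiv.subtypeEquivRight fun x => by simp only [Sum.smul_inl, Sum.inl.injEq])
      (Equiv.subtypeEquivRight fun y => by simp only [Sum.smul_inr, Sum.inr.injEq])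
  simp only [marks, Pi.add_apply, Nat.card_congr e, Nat.card_sum, Nat.cast_add]

theorem marks_prod (X Y : Type*) [MulAction G X] [MulAction G Y] :
    marks G (X × Y) = marks G X * marks G Y := by
  funext K
  have e : {c : X × Y // ∀ h ∈ K, h • c = c} ≃
      {x : X // ∀ h ∈ K, h • x = x} × {y : Y // ∀ h ∈ K, h • y = y} :=
    (Equiv.subtypeEquivRight fun c => by
      simp only [Prod.ext_iff, Prod.smul_fst, Prod.smul_snd]
      exact forall₂_and).trans Equiv.subtypeProdEquivProd
  simp only [marks, Pi.mul_apply, Nat.card_congr e, Nat.card_prod, Nat.cast_mul]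

theorem marks_punit : marks G PUnit.{v + 1} = 1 := by
  funext K
  simp [marks]

theorem marks_pempty : marks G PEmpty.{v + 1} = 0 := by
  funext K
  simp [marks, Nat.card_of_isEmpty]

variable (G) in
noncomputable def virtualMarks : Subring (Subgroup G → ℤ) where
  carrier := {f | ∃ (X : Type u) (_ : MulAction G X) (_ : Finite X)
    (Y : Type u) (_ : MulAction G Y) (_ : Finite Y), f = marks G X - marks G Y}
  one_mem' := ⟨PUnit, inferInstance, inferInstance, PEmpty, inferInstance, inferInstance, by
    rw [marks_punit, marks_pempty, sub_zero]⟩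
  zero_mem' := ⟨PEmpty, inferInstance, inferInstance, PEmpty, inferInstance, inferInstance,
    (sub_self _).symm⟩
  add_mem' := by
    rintro _ _ ⟨X, _, _, Y, _, _, rfl⟩ ⟨X', _, _, Y', _, _, rfl⟩
    exact ⟨X ⊕ X', inferInstance, inferInstance, Y ⊕ Y', inferInstance, inferInstance, by
      rw [marks_sum, marks_sum]; ring⟩
  neg_mem' := by
    rintro _ ⟨X, _, _, Y, _, _, rfl⟩
    exact ⟨Y, inferInstance, inferInstance, X, inferInstance, inferInstance, neg_sub ..⟩
  mul_mem' := by
    rintro _ _ ⟨X, _, _, Y, _, _, rfl⟩ ⟨X', _, _, Y', _, _, rfl⟩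
    exact ⟨X × X' ⊕ Y × Y', inferInstance, inferInstance,
      X × Y' ⊕ Y × X', inferInstance, inferInstance, by simp only [marks_sum, marks_prod]; ring⟩

theorem burnsideRing_le_virtualMarks [Finite G] : BurnsideRing G ≤ virtualMarks G := by
  refine Subring.closure_le.mpr (Set.range_subset_iff.mpr fun K => ?_)
  exact ⟨G ⧸ K, inferInstance, inferInstance, PEmpty, inferInstance, inferInstance, by
    rw [marks_pempty, sub_zero]; rfl⟩

end Marks

section Congruence

variable {G : Type*} [Group G] {X : Type*} [MulAction G X]

open MulAction Subgroup

variable (X) in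
def fixedPointsSubMulAction (K A : Subgroup G) (hA : A ≤ normalizer (K : Set G)) :
    SubMulAction A X where
  carrier := {x | ∀ k ∈ K, k • x = x}
  smul_mem' a x hx k hk := by
    have hconj : (a : G)⁻¹ * k * a ∈ K := (mem_normalizer_iff''.mp (hA a.2) k).mp hk
    calc k • (a : G) • x = (a : G) • ((a : G)⁻¹ * k * a) • x := by
          simp only [smul_smul, mul_assoc, mul_inv_cancel_left]
      _ = (a : G) • x := by rw [hx _ hconj]

theorem forall_mem_sup_zpowers_smul_eq_iff (K : Subgroup G) (g : G) (x : X) :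
    (∀ h ∈ K ⊔ zpowers g, h • x = x) ↔ (∀ k ∈ K, k • x = x) ∧ g • x = x := by
  change K ⊔ zpowers g ≤ stabilizer G x ↔ K ≤ stabilizer G x ∧ _
  rw [sup_le_iff, zpowers_le, mem_stabilizer_iff]

theorem card_dvd_sum_marks [Finite X] (K A : Subgroup G) [Fintype A]
    (hA : A ≤ normalizer (K : Set G)) :
    (Nat.card A : ℤ) ∣ ∑ a : A, marks G X (K ⊔ zpowers (a : G)) := by
  classical
  let S := fixedPointsSubMulAction X K A hA
  have hfixed (a : A) : fixedBy S a ≃ {x : X // ∀ h ∈ K ⊔ zpowers (a : G), h • x = x} :=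
    (Equiv.subtypeEquivRight fun _ => mem_fixedBy.trans Subtype.ext_iff).trans <|
      (Equiv.subtypeSubtypeEquivSubtypeInter (· ∈ S) (fun x => (a : G) • x = x)).trans
        (Equiv.subtypeEquivRight fun x => (forall_mem_sup_zpowers_smul_eq_iff K a x).symm)
  have : Fintype S := Fintype.ofFinite S
  have : Fintype (orbitRel.Quotient A S) := Fintype.ofFinite _
  have burnside := sum_card_fixedBy_eq_card_orbits_mul_card_group A S
  refine ⟨Fintype.card (orbitRel.Quotient A S), ?_⟩
  simp only [marks, ← Nat.card_congr (hfixed _), Nat.card_eq_fintype_card]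
  exact_mod_cast burnside.trans (mul_comm _ _)

theorem card_dvd_sum_of_mem_burnsideRing [Finite G] {f : Subgroup G → ℤ}
    (hf : f ∈ BurnsideRing G) (K A : Subgroup G) [Fintype A] (hA : A ≤ normalizer (K : Set G)) :
    (Nat.card A : ℤ) ∣ ∑ a : A, f (K ⊔ zpowers (a : G)) := by
  obtain ⟨X, _, _, Y, _, _, rfl⟩ := burnsideRing_le_virtualMarks hf
  simp only [Pi.sub_apply, Finset.sum_sub_distrib]
  exact dvd_sub (card_dvd_sum_marks K A hA) (card_dvd_sum_marks K A hA)

end Congruence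

section FaithfulUnits

variable {G : Type*} [Group G]

open Subgroup

theorem ghost_eq_one_or_neg_one (u : (BurnsideRing G)ˣ) (K : Subgroup G) :
    ghost u K = 1 ∨ ghost u K = -1 :=
  Int.isUnit_iff.mp <| u.isUnit.map <|
    (Pi.evalRingHom (fun _ : Subgroup G => ℤ) K).comp (BurnsideRing G).subtype

theorem IsFaithfulUnit.card_center_dvd_ghost_sub_one [Finite G] [Fintype (center G)]
    {u : (BurnsideRing G)ˣ} (hu : IsFaithfulUnit u) (K : Subgroup G) :
    (Nat.card (center G) : ℤ) ∣ ghost u K - 1 := by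
  have hdvd := card_dvd_sum_of_mem_burnsideRing u.val.2 K (center G) (center_le_normalizer _)
  have hsum : ∑ z : center G, (ghost u (K ⊔ zpowers (z : G)) - 1) = ghost u K - 1 := by
    rw [Fintype.sum_eq_single 1 fun z hz => ?_]
    · rw [OneMemClass.coe_one, zpowers_one_eq_bot, sup_bot_eq]
    · refine sub_eq_zero.mpr (hu _ ⟨zpowers (z : G), normal_of_le_center (zpowers_le.mpr z.2),
        zpowers_ne_bot.mpr ?_, le_sup_right⟩)
      exact_mod_cast hz
  rw [← hsum, Finset.sum_sub_distrib, Finset.sum_const, Finset.card_univ,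
    ← Nat.card_eq_fintype_card, nsmul_one]
  exact dvd_sub hdvd dvd_rfl

theorem IsFaithfulUnit.eq_one [Finite G] (hZ : 2 < Nat.card (center G))
    {u : (BurnsideRing G)ˣ} (hu : IsFaithfulUnit u) : u = 1 := by
  have : Fintype (center G) := Fintype.ofFinite _
  refine Units.ext <| Subtype.ext <| funext fun K => ?_
  refine (ghost_eq_one_or_neg_one u K).resolve_right fun hneg => ?_
  have hdvd := hu.card_center_dvd_ghost_sub_one K
  rw [hneg, show (-1 - 1 : ℤ) = -2 by norm_num, dvd_neg] at hdvd
  have := Int.le_of_dvd two_pos hdvd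
  omega

end FaithfulUnits

/-- If the center of a finite group `G` has order greater than `2`, then the
faithful part of `B^×(G)` is trivial; in particular this holds for an abelian
group of order greater than `2`. -/
theorem faithful_units_trivial_of_large_center (G : Type*) [Group G] [Finite G] :
    (2 < Nat.card (Subgroup.center G) →
      ∀ u : (BurnsideRing G)ˣ, IsFaithfulUnit u → u = 1) ∧
    ((∀ a b : G, a * b = b * a) → 2 < Nat.card G →
      ∀ u : (BurnsideRing G)ˣ, IsFaithfulUnit u → u = 1) :=
  ⟨fun hZ _ hu => hu.eq_one hZ, fun hcomm hG _ hu =>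
    hu.eq_one (by rwa [Subgroup.center_eq_top_of_comm hcomm, Subgroup.card_top])⟩
end

section
/- Let G be a pseudodihedral group (or abelian). If S is a normal subgroup of G, then G/S is isomorphic to a subgroup of G. Moreover, every pseudodihedral subgroup Y of G is isomorphic to a quotient of G. -/
/-!
Write `G = N ⋊ ⟨x⟩` with `x` an involution inverting the abelian group `N`. Since a finite
abelian group is isomorphic to its character group `Hom(A, ℂˣ)`, every quotient of `N` embeds
in `N` and every subgroup of `N` is a quotient of `N`. A homomorphism `φ : N → H` extends to `G`
by sending `x` to any involution of `H` that inverts `φ(N)`.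

For a normal subgroup `S ≤ N`, extending `N → N ⧸ S ↪ N` by `x ↦ x` gives an endomorphism of
`G` with kernel `S`; if `S ⊄ N`, then `G ⧸ S` is a quotient of `N`, hence embeds in `N`.
A pseudodihedral subgroup `Y` is not abelian, so it contains some `y ∉ N`, which is again an
involution inverting `N`; extending a surjection `N ↠ Y ∩ N` by `x ↦ y` gives `G ↠ Y`.
-/

open Pointwise

/-- A pseudodihedral group: `C₂ ⋉ N` with `N` abelian of order `> 2`, cyclic Sylow
`2`-subgroup, and a complement of order `2` acting by inversion. -/
def IsPseudodihedral (G : Type*) [Group G] : Prop :=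
  ∃ N : Subgroup G, (∀ a b : N, a * b = b * a) ∧ 2 < Nat.card N ∧ N.index = 2 ∧
    (∀ P : Sylow 2 N, IsCyclic (P : Subgroup N)) ∧
    ∃ x : G, x ∉ N ∧ x * x = 1 ∧ ∀ n ∈ N, x * n * x⁻¹ = n⁻¹

open Function

namespace CommGroup

variable {A : Type*} [CommGroup A] [Finite A]

lemma exists_injective_quotient (K : Subgroup A) : ∃ j : A ⧸ K →* A, Injective j := by
  obtain ⟨eA⟩ := monoidHom_mulEquiv_of_hasEnoughRootsOfUnity A ℂ
  obtain ⟨eQ⟩ := monoidHom_mulEquiv_of_hasEnoughRootsOfUnity (A ⧸ K) ℂ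
  refine ⟨eA.toMonoidHom.comp <| (MonoidHom.domRestrictHom K ℂˣ).ker.subtype.comp <|
    (MonoidHom.domRestrictHomKerEquiv ℂˣ K).symm.toMonoidHom.comp eQ.symm.toMonoidHom, ?_⟩
  exact eA.injective.comp <| Subtype.val_injective.comp <|
    (MonoidHom.domRestrictHomKerEquiv ℂˣ K).symm.injective.comp eQ.symm.injective

lemma exists_surjective_onto_subgroup (K : Subgroup A) : ∃ s : A →* K, Surjective s := by
  obtain ⟨eA⟩ := monoidHom_mulEquiv_of_hasEnoughRootsOfUnity A ℂ
  obtain ⟨eK⟩ := monoidHom_mulEquiv_of_hasEnoughRootsOfUnity K ℂ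
  exact ⟨eK.toMonoidHom.comp <| (MonoidHom.domRestrictHom K ℂˣ).comp eA.symm.toMonoidHom,
    eK.surjective.comp <| (MonoidHom.domRestrict_surjective ℂ K).comp eA.symm.surjective⟩

lemma exists_ker_eq (K : Subgroup A) : ∃ f : A →* A, f.ker = K := by
  obtain ⟨j, hj⟩ := exists_injective_quotient K
  exact ⟨j.comp (QuotientGroup.mk' K), by
    rw [MonoidHom.ker_comp_of_injective _ _ hj, QuotientGroup.ker_mk']⟩

end CommGroup

/-- `G` is the generalized dihedral group `N ⋊ ⟨x⟩`, the involution `x` acting by inversion. -/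
structure IsGeneralizedDihedral {G : Type*} [Group G] (N : Subgroup G) (x : G) : Prop where
  index_eq_two : N.index = 2
  notMem : x ∉ N
  mul_self : x * x = 1
  conj_eq_inv : ∀ n ∈ N, x * n * x⁻¹ = n⁻¹

namespace IsGeneralizedDihedral

variable {G H : Type*} [Group G] [Group H] {N : Subgroup G} {x : G}

lemma mul_mem_of_notMem (hN : IsGeneralizedDihedral N x) {u v : G} (hu : u ∉ N)
    (hv : v ∉ N) : u * v ∈ N :=
  (Subgroup.mul_mem_iff_of_index_two hN.index_eq_two).2 (iff_of_false hu hv)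

lemma mul_eq_inv_mul (hN : IsGeneralizedDihedral N x) {n : G} (hn : n ∈ N) :
    x * n = n⁻¹ * x := by
  rw [← hN.conj_eq_inv n hn, inv_mul_cancel_right]

lemma mul_comm_of_mem (hN : IsGeneralizedDihedral N x) {a b : G} (ha : a ∈ N) (hb : b ∈ N) :
    a * b = b * a := by
  have h : a⁻¹ * b⁻¹ = (a * b)⁻¹ := by
    rw [← hN.conj_eq_inv a ha, ← hN.conj_eq_inv b hb, ← hN.conj_eq_inv _ (mul_mem ha hb)]
    group
  rw [← inv_inj, ← h, mul_inv_rev]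

lemma isMulCommutative (hN : IsGeneralizedDihedral N x) : IsMulCommutative N :=
  .of_comm fun a b => Subtype.ext (hN.mul_comm_of_mem a.2 b.2)

lemma of_notMem (hN : IsGeneralizedDihedral N x) {u : G} (hu : u ∉ N) :
    IsGeneralizedDihedral N u := by
  obtain ⟨w, hw, rfl⟩ : ∃ w ∈ N, u = w * x :=
    ⟨u * x, hN.mul_mem_of_notMem hu hN.notMem, by rw [mul_assoc, hN.mul_self, mul_one]⟩
  refine ⟨hN.index_eq_two, hu, ?_, fun n hn => ?_⟩
  · calc w * x * (w * x) = w * (x * w * x⁻¹) * (x * x) := by group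
      _ = 1 := by rw [hN.conj_eq_inv w hw, hN.mul_self, mul_one, mul_inv_cancel]
  · calc w * x * n * (w * x)⁻¹ = w * (x * n * x⁻¹) * w⁻¹ := by group
      _ = n⁻¹ := by
        rw [hN.conj_eq_inv n hn, hN.mul_comm_of_mem hw (inv_mem hn), mul_inv_cancel_right]

lemma exists_eq_or_eq_mul (hN : IsGeneralizedDihedral N x) (g : G) :
    ∃ n : N, g = n ∨ g = n * x := by
  by_cases hg : g ∈ N
  · exact ⟨⟨g, hg⟩, Or.inl rfl⟩
  · exact ⟨⟨g * x, hN.mul_mem_of_notMem hg hN.notMem⟩, Or.inr (by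
      rw [mul_assoc, hN.mul_self, mul_one])⟩

lemma exists_monoidHom_extend (hN : IsGeneralizedDihedral N x) (φ : N →* H) {y : H}
    (hyy : y * y = 1) (hyφ : ∀ n, y * φ n * y⁻¹ = (φ n)⁻¹) :
    ∃ F : G →* H, (∀ n : N, F n = φ n) ∧ F x = y := by
  classical
  have hyφ' : ∀ n, y * φ n = (φ n)⁻¹ * y := fun n => by rw [← hyφ, inv_mul_cancel_right]
  let f : G → H := fun g =>
    if hg : g ∈ N then φ ⟨g, hg⟩ else φ ⟨g * x, hN.mul_mem_of_notMem hg hN.notMem⟩ * y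
  have f_mem (n : N) : f n = φ n := dif_pos n.2
  have f_mul (n : N) : f (n * x) = φ n * y := by
    have hnx : (n : G) * x ∉ N := fun h => hN.notMem ((N.mul_mem_cancel_left n.2).1 h)
    simp only [f, dif_neg hnx, mul_assoc, hN.mul_self, mul_one]
  refine ⟨{ toFun := f, map_one' := ?_, map_mul' := fun a b => ?_ }, f_mem, ?_⟩
  · simpa using f_mem 1
  · obtain ⟨m, rfl | rfl⟩ := hN.exists_eq_or_eq_mul a <;>
      obtain ⟨n, rfl | rfl⟩ := hN.exists_eq_or_eq_mul b
    · rw [← Subgroup.coe_mul, f_mem, f_mem, f_mem, map_mul]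
    · rw [← mul_assoc, ← Subgroup.coe_mul, f_mem, f_mul, f_mul, map_mul, mul_assoc]
    · rw [mul_assoc, hN.mul_eq_inv_mul n.2, ← mul_assoc, ← Subgroup.coe_inv,
        ← Subgroup.coe_mul, f_mul, f_mul, f_mem, map_mul, map_inv, mul_assoc, mul_assoc, hyφ']
    · rw [mul_assoc, ← mul_assoc x, hN.mul_eq_inv_mul n.2, mul_assoc, hN.mul_self, mul_one,
        ← Subgroup.coe_inv, ← Subgroup.coe_mul, f_mem, f_mul, f_mul, map_mul, map_inv,
        mul_assoc, ← mul_assoc y, hyφ', mul_assoc, hyy, mul_one]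
  · simpa using f_mul 1

lemma ker_eq_map_of_notMem_range (hN : IsGeneralizedDihedral N x) {F : G →* H}
    {φ : N →* H} (hF : ∀ n : N, F n = φ n) (hx : F x ∉ φ.range) :
    F.ker = φ.ker.map N.subtype := by
  ext g
  constructor
  · intro hg
    by_cases hgN : g ∈ N
    · exact ⟨⟨g, hgN⟩, MonoidHom.mem_ker.2 (by rw [← hF]; exact hg), rfl⟩
    · refine absurd ⟨⟨g * x, hN.mul_mem_of_notMem hgN hN.notMem⟩, ?_⟩ hx
      rw [← hF, map_mul, MonoidHom.mem_ker.1 hg, one_mul]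
  · rintro ⟨n, hn, rfl⟩
    rw [MonoidHom.mem_ker, Subgroup.coe_subtype, hF]
    exact hn

open scoped IsMulCommutative

lemma exists_ker_eq_of_le [Finite N] (hN : IsGeneralizedDihedral N x) {S : Subgroup G}
    (hS : S ≤ N) : ∃ F : G →* G, F.ker = S := by
  have := hN.isMulCommutative
  obtain ⟨f, hf⟩ := CommGroup.exists_ker_eq (S.subgroupOf N)
  obtain ⟨F, hFN, hFx⟩ := hN.exists_monoidHom_extend (N.subtype.comp f) hN.mul_self
    fun n => hN.conj_eq_inv _ (f n).2
  have hx : F x ∉ (N.subtype.comp f).range := by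
    rintro ⟨n, hn⟩
    exact hN.notMem (hFx ▸ hn ▸ (f n).2)
  refine ⟨F, ?_⟩
  rw [hN.ker_eq_map_of_notMem_range hFN hx,
    MonoidHom.ker_comp_of_injective _ _ N.subtype_injective, hf,
    Subgroup.map_subgroupOf_eq_of_le hS]

/-- An element of `S` outside `N` makes `N → G ⧸ S` surjective. -/
lemma exists_ker_eq_of_not_le [Finite N] (hN : IsGeneralizedDihedral N x) {S : Subgroup G}
    [S.Normal] (hS : ¬ S ≤ N) : ∃ F : G →* G, F.ker = S := by
  have := hN.isMulCommutative
  obtain ⟨c, hcS, hcN⟩ := SetLike.not_le_iff_exists.1 hS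
  let p : N →* G ⧸ S := (QuotientGroup.mk' S).comp N.subtype
  have hp : Surjective p := by
    intro q
    obtain ⟨g, rfl⟩ := QuotientGroup.mk'_surjective S q
    by_cases hg : g ∈ N
    · exact ⟨⟨g, hg⟩, rfl⟩
    · refine ⟨⟨g * c, hN.mul_mem_of_notMem hg hcN⟩, ?_⟩
      simp [p, (QuotientGroup.eq_one_iff c).2 hcS]
  obtain ⟨j, hj⟩ := CommGroup.exists_injective_quotient p.ker
  refine ⟨N.subtype.comp <| j.comp <|
    (QuotientGroup.quotientKerEquivOfSurjective p hp).symm.toMonoidHom.comp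
      (QuotientGroup.mk' S), ?_⟩
  rw [MonoidHom.ker_comp_of_injective _ _ N.subtype_injective,
    MonoidHom.ker_comp_of_injective _ _ hj,
    MonoidHom.ker_comp_of_injective _ _ (MulEquiv.injective _), QuotientGroup.ker_mk']

lemma exists_ker_eq [Finite N] (hN : IsGeneralizedDihedral N x) (S : Subgroup G) [S.Normal] :
    ∃ F : G →* G, F.ker = S := by
  by_cases hS : S ≤ N
  · exact hN.exists_ker_eq_of_le hS
  · exact hN.exists_ker_eq_of_not_le hS

lemma exists_surjective_of_not_le [Finite N] (hN : IsGeneralizedDihedral N x) {Y : Subgroup G}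
    (hY : ¬ Y ≤ N) : ∃ f : G →* Y, Surjective f := by
  have := hN.isMulCommutative
  obtain ⟨y, hyY, hyN⟩ := SetLike.not_le_iff_exists.1 hY
  have hy := hN.of_notMem hyN
  obtain ⟨s, hs⟩ := CommGroup.exists_surjective_onto_subgroup (Y.subgroupOf N)
  let ψ : N →* Y := (N.subtype.comp ((Y.subgroupOf N).subtype.comp s)).codRestrict Y
    fun n => (s n).2
  obtain ⟨F, hFN, hFy⟩ := hN.exists_monoidHom_extend ψ (y := ⟨y, hyY⟩)
    (Subtype.ext hy.mul_self) fun n => Subtype.ext (hy.conj_eq_inv _ (s n).1.2)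
  have mem_range : ∀ t : Y, (t : G) ∈ N → ∃ g, F g = t := fun t ht => by
    obtain ⟨m, hm⟩ := hs ⟨⟨t, ht⟩, t.2⟩
    exact ⟨m, by
      rw [hFN]
      exact Subtype.ext (congrArg (fun b : Y.subgroupOf N => ((b : N) : G)) hm)⟩
  refine ⟨F, fun t => ?_⟩
  by_cases ht : (t : G) ∈ N
  · exact mem_range t ht
  · obtain ⟨g, hg⟩ := mem_range (t * ⟨y, hyY⟩) (hN.mul_mem_of_notMem ht hyN)
    refine ⟨g * x, ?_⟩
    rw [map_mul, hg, hFy, mul_assoc]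
    ext
    simp [hy.mul_self]

end IsGeneralizedDihedral

namespace IsPseudodihedral

variable {G : Type*} [Group G]

lemma exists_isGeneralizedDihedral (hG : IsPseudodihedral G) :
    ∃ (N : Subgroup G) (x : G), IsGeneralizedDihedral N x := by
  obtain ⟨N, -, -, hidx, -, x, hx, hxx, hinv⟩ := hG
  exact ⟨N, x, hidx, hx, hxx, hinv⟩

/-- If `G` were abelian, inversion on `N` would be trivial, so the cyclic `2`-group `N` would
have exponent `2`, hence order at most `2`. -/
lemma not_forall_mul_comm (hG : IsPseudodihedral G) : ¬ ∀ a b : G, a * b = b * a := by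
  intro hcomm
  obtain ⟨N, -, hcard, -, hsyl, x, -, -, hinv⟩ := hG
  have hsq : ∀ n : N, n ^ 2 = 1 := fun n => Subtype.ext <| by
    rw [pow_two, Subgroup.coe_mul, Subgroup.coe_one, mul_eq_one_iff_eq_inv, ← hinv n n.2,
      hcomm x, mul_inv_cancel_right]
  have hP : IsPGroup 2 (⊤ : Subgroup N) := fun n => ⟨1, Subtype.ext (hsq n)⟩
  have : IsCyclic (⊤ : Subgroup N) := hP.toSylow_coe (by simp) ▸ hsyl _
  have : Nat.card N ∣ 2 := by
    rw [← Subgroup.card_top, ← IsCyclic.exponent_eq_card]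
    exact Monoid.exponent_dvd_of_forall_pow_eq_one fun n => Subtype.ext (hsq n)
  exact absurd (Nat.le_of_dvd two_pos this) (not_le.2 hcard)

end IsPseudodihedral

/-- If `G` is pseudodihedral or abelian, then every quotient of `G` is isomorphic
to a subgroup of `G`, and every pseudodihedral subgroup of `G` is isomorphic to a
quotient of `G`. -/
theorem pseudodihedral_quotients_and_subgroups (G : Type*) [Group G] [Finite G]
    (hG : IsPseudodihedral G ∨ ∀ a b : G, a * b = b * a) :
    (∀ S : Subgroup G, S.Normal →
      ∃ X : Subgroup G, ∃ f : G →* X, Function.Surjective f ∧ f.ker = S) ∧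
    (∀ Y : Subgroup G, IsPseudodihedral Y →
      ∃ f : G →* Y, Function.Surjective f) := by
  have of_ker_eq : ∀ S : Subgroup G, (∃ F : G →* G, F.ker = S) →
      ∃ X : Subgroup G, ∃ f : G →* X, Surjective f ∧ f.ker = S := by
    rintro S ⟨F, rfl⟩
    exact ⟨F.range, F.rangeRestrict, F.rangeRestrict_surjective, F.ker_rangeRestrict⟩
  rcases hG with hG | hcomm
  · obtain ⟨N, x, hN⟩ := hG.exists_isGeneralizedDihedral
    refine ⟨fun S _ => of_ker_eq S (hN.exists_ker_eq S), fun Y hY => ?_⟩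
    refine hN.exists_surjective_of_not_le fun hYN => hY.not_forall_mul_comm fun a b => ?_
    exact Subtype.ext (hN.mul_comm_of_mem (hYN a.2) (hYN b.2))
  · let : CommGroup G := { mul_comm := hcomm }
    refine ⟨fun S _ => of_ker_eq S (CommGroup.exists_ker_eq S), fun Y hY => ?_⟩
    exact (hY.not_forall_mul_comm fun a b => Subtype.ext (hcomm a b)).elim
end

section
/- Let G be a pseudodihedral group with unique abelian subgroup N of index 2 (the unique cyclic subgroup of index 2 if G ≅ D₈). If S is a nontrivial normal subgroup of G with [G:S] > 2, then S ≤ N. -/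
/-!
Any `s ∈ S \ N` acts on `N` by inversion, so for `m ∈ N` the commutator `[m, s] = m²` lies in
the normal subgroup `S`. Since the Sylow `2`-subgroup of the abelian group `N` is cyclic, `N`
has at most two elements of order dividing `2`, so the squares form a subgroup of index at most
`2` in `N`. Hence `S ∩ N` has index at most `2` in `N`, and as `S ⊄ N` this forces `[G : S] ≤ 2`.
-/

namespace Subgroup

variable {G : Type*} [Group G]

theorem index_eq_relIndex_of_index_eq_two {N S : Subgroup G} (hN : N.index = 2) (hSN : ¬S ≤ N) :
    S.index = S.relIndex N := by
  have hNS : N.relIndex S = 2 := by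
    have := normal_of_index_eq_two hN
    have hdvd : N.relIndex S ∣ 2 := hN ▸ relIndex_dvd_index_of_normal N S
    exact ((Nat.dvd_prime Nat.prime_two).mp hdvd).resolve_left (mt relIndex_eq_one.mp hSN)
  have hS := relIndex_mul_index (inf_le_left : S ⊓ N ≤ S)
  have hN' := relIndex_mul_index (inf_le_right : S ⊓ N ≤ N)
  rw [inf_relIndex_left, hNS] at hS
  rw [inf_relIndex_right, hN] at hN'
  omega

theorem card_le_of_exponent_dvd_of_isCyclic_sylow [Finite G] {p : ℕ} [Fact p.Prime]
    (hsyl : ∀ P : Sylow p G, IsCyclic P) {H : Subgroup G} (hH : Monoid.exponent H ∣ p) :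
    Nat.card H ≤ p := by
  obtain ⟨P, hHP⟩ := (IsPGroup.of_exponent_dvd_pow (n := 1) (by simpa using hH)).exists_le_sylow
  have := hsyl P
  have : IsCyclic H := isCyclic_of_le hHP
  rw [← IsCyclic.exponent_eq_card]
  exact Nat.le_of_dvd (Fact.out : p.Prime).pos hH

end Subgroup

theorem index_range_powMonoidHom_le_of_isCyclic_sylow {A : Type*} [CommGroup A] [Finite A]
    {p : ℕ} [Fact p.Prime] (hsyl : ∀ P : Sylow p A, IsCyclic P) :
    (powMonoidHom p : A →* A).range.index ≤ p := by
  rw [Subgroup.index_range]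
  exact Subgroup.card_le_of_exponent_dvd_of_isCyclic_sylow hsyl
    (Monoid.exponent_dvd_of_forall_pow_eq_one fun a ↦ Subtype.ext a.2)

theorem conj_eq_inv_of_notMem {G : Type*} [Group G] {N : Subgroup G}
    (hab : ∀ a b : N, a * b = b * a) (hidx : N.index = 2) {x : G} (hxN : x ∉ N)
    (hinv : ∀ n ∈ N, x * n * x⁻¹ = n⁻¹) {g : G} (hg : g ∉ N) {n : G} (hn : n ∈ N) :
    g * n * g⁻¹ = n⁻¹ := by
  have hk : x⁻¹ * g ∈ N := by
    rw [Subgroup.mul_mem_iff_of_index_two hidx, inv_mem_iff]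
    exact iff_of_false hxN hg
  have hkn : (x⁻¹ * g) * n = n * (x⁻¹ * g) := congrArg Subtype.val (hab ⟨_, hk⟩ ⟨n, hn⟩)
  calc g * n * g⁻¹ = x * ((x⁻¹ * g) * n * (x⁻¹ * g)⁻¹) * x⁻¹ := by group
    _ = x * n * x⁻¹ := by rw [hkn]; group
    _ = n⁻¹ := hinv n hn

theorem mul_self_mem_of_conj_eq_inv {G : Type*} [Group G] {S : Subgroup G} (hS : S.Normal)
    {g m : G} (hg : g ∈ S) (hgm : g * m * g⁻¹ = m⁻¹) : m * m ∈ S := by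
  have hcomm : m * g * m⁻¹ * g⁻¹ ∈ S := S.mul_mem (hS.conj_mem g hg m) (S.inv_mem hg)
  have : m * g * m⁻¹ * g⁻¹ = m * (g * m * g⁻¹)⁻¹ := by group
  rwa [this, hgm, inv_inv] at hcomm

theorem pseudodihedral_normal_le_general (G : Type*) [Group G] [Finite G]
    (N : Subgroup G) (hab : ∀ a b : N, a * b = b * a)
    (hidx : N.index = 2)
    (hsyl : ∀ P : Sylow 2 N, IsCyclic (P : Subgroup N))
    (x : G) (hxN : x ∉ N)
    (hinv : ∀ n ∈ N, x * n * x⁻¹ = n⁻¹)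
    (S : Subgroup G) (hS : S.Normal) (hSidx : 2 < S.index) :
    S ≤ N := by
  by_contra hSN
  obtain ⟨s, hsS, hsN⟩ := SetLike.not_le_iff_exists.mp hSN
  let : CommGroup N := { mul_comm := hab }
  have hsq : (powMonoidHom 2 : N →* N).range ≤ S.subgroupOf N := by
    rintro _ ⟨m, rfl⟩
    show ((m : G) ^ 2) ∈ S
    rw [pow_two]
    exact mul_self_mem_of_conj_eq_inv hS hsS (conj_eq_inv_of_notMem hab hidx hxN hinv hsN m.2)
  have : S.index ≤ 2 :=
    calc S.index = (S.subgroupOf N).index := Subgroup.index_eq_relIndex_of_index_eq_two hidx hSN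
      _ ≤ (powMonoidHom 2 : N →* N).range.index := Subgroup.index_antitone hsq
      _ ≤ 2 := index_range_powMonoidHom_le_of_isCyclic_sylow hsyl
  omega

/-- In a pseudodihedral group `G = ⟨x⟩ ⋉ N` (with `N` the abelian subgroup of
index `2`, cyclic `2`-part), every nontrivial normal subgroup of index greater
than `2` is contained in `N`. -/
theorem pseudodihedral_normal_le (G : Type*) [Group G] [Finite G]
    (N : Subgroup G) (hab : ∀ a b : N, a * b = b * a)
    (hcard : 2 < Nat.card N) (hidx : N.index = 2)
    (hsyl : ∀ P : Sylow 2 N, IsCyclic (P : Subgroup N))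
    (x : G) (hxN : x ∉ N) (hx2 : x * x = 1)
    (hinv : ∀ n ∈ N, x * n * x⁻¹ = n⁻¹)
    (S : Subgroup G) (hS : S.Normal) (hSbot : S ≠ ⊥) (hSidx : 2 < S.index) :
    S ≤ N :=
  pseudodihedral_normal_le_general G N hab hidx hsyl x hxN hinv S hS hSidx
end

section
/- Let G be a finite abelian group. Then the unit group B^×(G) of the Burnside ring of G is generated by the elements Ten^G_H(−1) as H ranges over the subgroups of G, where Ten^G_H denotes tensor (multiplicative) induction. -/
open Pointwise

/-- The ghost vector of the tensor induction `Ten_H^G(-1)` of the unit `-1 ∈ B(H)ˣ`: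
its mark at `L ≤ G` is `(-1)` raised to the number of `(L,H)`-double cosets in `G`. -/
noncomputable def tenNegOne {G : Type*} [Group G] (H : Subgroup G) : Subgroup G → ℤ :=
  fun L => (-1) ^ Nat.card (DoubleCoset.Quotient (L : Set G) (H : Set G))

/-!
For abelian `G` every subgroup is normal, so the mark of `[G/K]` at `L` is `|G : K|` if `L ≤ K`
and `0` otherwise. Products of such marks are multiples of marks, so `B(G)` is the additive span
of the `[G/K]`, each of which satisfies the congruence `|G| ∣ ∑_{g ∈ G} f(⟨g⟩L)`. A unit has all
marks `±1`. If it is `1` at `G` and at every subgroup of index `2`, it is `1` everywhere: at a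
maximal `L` where it is `-1`, the congruence reads `|G| ∣ |G| - 2|L|`, so `|G : L| ≤ 2`.

On the other hand `Ten^G_G(-1) = -1`, and for `|G : M| = 2` the unit `-Ten^G_M(-1) = 1 - [G/M]`
has mark `1` at `G` and, among the subgroups of index `2`, mark `-1` exactly at `M`. Multiplying a
unit by `±1` and by suitable such elements therefore makes it `1` at `G` and at every subgroup of
index `2`, hence equal to `1`.
-/

section Group

variable {G : Type*} [Group G]

theorem QuotientGroup.smul_eq_self_iff_mem {K : Subgroup G} [K.Normal] (h : G) (x : G ⧸ K) :
    h • x = x ↔ h ∈ K := by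
  induction x using QuotientGroup.induction_on with
  | H g =>
    rw [MulAction.Quotient.smul_mk, smul_eq_mul, QuotientGroup.mk_mul, mul_eq_right,
      QuotientGroup.eq_one_iff]

theorem natCard_doubleCosetQuotient_of_normal (L H : Subgroup G) [hH : H.Normal] :
    Nat.card (DoubleCoset.Quotient (L : Set G) (H : Set G)) = (L ⊔ H).index := by
  rw [Subgroup.index,
    ← Nat.card_congr (QuotientGroup.quotientRightRelEquivQuotientLeftRel (L ⊔ H))]
  refine Nat.card_congr (Quotient.congrRight fun a b => ?_)
  rw [DoubleCoset.rel_iff, QuotientGroup.rightRel_apply, ← SetLike.mem_coe, Subgroup.mul_normal,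
    Set.mem_mul]
  constructor
  · rintro ⟨l, hl, h, hh, rfl⟩
    exact ⟨l, hl, a * h * a⁻¹, hH.conj_mem h hh a, by group⟩
  · rintro ⟨l, hl, h, hh, hlh⟩
    exact ⟨l, hl, a⁻¹ * h * a, by simpa using hH.conj_mem h hh a⁻¹, by
      rw [← mul_assoc, ← mul_assoc, mul_assoc l, mul_inv_cancel, mul_one, hlh]; group⟩

open Classical in
theorem burnsideMark_of_normal (K L : Subgroup G) [K.Normal] :
    burnsideMark G K L = if L ≤ K then (K.index : ℤ) else 0 := by
  unfold burnsideMark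
  split_ifs with hLK
  · rw [Subgroup.index, Nat.card_congr (Equiv.subtypeUnivEquiv fun x h hh =>
      (QuotientGroup.smul_eq_self_iff_mem h x).2 (hLK hh))]
  · obtain ⟨h, hL, hK⟩ := SetLike.not_le_iff_exists.1 hLK
    have : IsEmpty {x : G ⧸ K // ∀ h ∈ L, h • x = x} :=
      ⟨fun x => hK ((QuotientGroup.smul_eq_self_iff_mem h x.1).1 (x.2 h hL))⟩
    simp

theorem burnsideMark_mul_of_normal (K K' : Subgroup G) [K.Normal] [K'.Normal] :
    burnsideMark G K * burnsideMark G K'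
      = (K'.index / K'.relIndex K) • burnsideMark G (K ⊓ K') := by
  have hkey : (K'.index / K'.relIndex K) * (K ⊓ K').index = K.index * K'.index := by
    rw [← Subgroup.relIndex_mul_index (inf_le_left : K ⊓ K' ≤ K), inf_comm,
      Subgroup.inf_relIndex_right, ← mul_assoc,
      Nat.div_mul_cancel (Subgroup.relIndex_dvd_index_of_normal K' K), mul_comm]
  funext L
  simp only [Pi.mul_apply, Pi.smul_apply, burnsideMark_of_normal]
  split_ifs <;> simp_all [← Nat.cast_mul, ← hkey]

theorem burnsideMark_top : burnsideMark G ⊤ = 1 :=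
  funext fun L => by simp [burnsideMark_of_normal]

theorem burnsideMark_mem_burnsideRing (K : Subgroup G) : burnsideMark G K ∈ BurnsideRing G :=
  Subring.subset_closure (Set.mem_range_self K)

theorem Subgroup.eq_or_eq_top_of_le_of_prime_index {M K : Subgroup G} (hM : M.index.Prime)
    (hMK : M ≤ K) : K = M ∨ K = ⊤ := by
  rcases (Nat.dvd_prime hM).1 (Subgroup.index_dvd_of_le hMK) with h | h
  · exact Or.inr (Subgroup.index_eq_one.1 h)
  · have hrel := Subgroup.relIndex_mul_index hMK
    rw [h, mul_eq_right₀ hM.ne_zero, Subgroup.relIndex_eq_one] at hrel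
    exact Or.inl (le_antisymm hrel hMK)

theorem ghost_injective : Function.Injective (ghost (G := G)) :=
  fun _ _ h => Units.ext (Subtype.ext h)

theorem ghost_mul (u v : (BurnsideRing G)ˣ) : ghost (u * v) = ghost u * ghost v := rfl

theorem ghost_neg (u : (BurnsideRing G)ˣ) : ghost (-u) = -ghost u := rfl

theorem ghost_prod {ι : Type*} (s : Finset ι) (u : ι → (BurnsideRing G)ˣ) :
    ghost (∏ i ∈ s, u i) = ∏ i ∈ s, ghost (u i) :=
  map_prod ((BurnsideRing G).subtype.toMonoidHom.comp (Units.coeHom _)) u s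

theorem ghost_apply_eq_one_or_eq_neg_one (u : (BurnsideRing G)ˣ) (L : Subgroup G) :
    ghost u L = 1 ∨ ghost u L = -1 :=
  Int.isUnit_iff.1 (u.isUnit.map ((Pi.evalRingHom _ L).comp (BurnsideRing G).subtype))

theorem exists_ghost_eq_of_mul_self_eq_one {f : Subgroup G → ℤ} (hf : f ∈ BurnsideRing G)
    (hff : f * f = 1) : ∃ u, ghost u = f :=
  ⟨⟨⟨f, hf⟩, ⟨f, hf⟩, Subtype.ext hff, Subtype.ext hff⟩, rfl⟩

theorem tenNegOne_mul_self (H : Subgroup G) : tenNegOne H * tenNegOne H = 1 :=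
  funext fun L => by simp [tenNegOne, ← mul_pow]

theorem tenNegOne_apply_of_normal (H : Subgroup G) [H.Normal] (L : Subgroup G) :
    tenNegOne H L = (-1) ^ (L ⊔ H).index := by
  rw [tenNegOne, natCard_doubleCosetQuotient_of_normal]

theorem tenNegOne_top : tenNegOne (⊤ : Subgroup G) = -1 :=
  funext fun L => by simp [tenNegOne_apply_of_normal]

theorem tenNegOne_apply_top (H : Subgroup G) [H.Normal] : tenNegOne H ⊤ = -1 := by
  simp [tenNegOne_apply_of_normal]

open Classical in
theorem tenNegOne_apply_of_index_eq_two {M : Subgroup G} (hM : M.index = 2) (L : Subgroup G) :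
    tenNegOne M L = if L ≤ M then 1 else -1 := by
  have := Subgroup.normal_of_index_eq_two hM
  rw [tenNegOne_apply_of_normal]
  split_ifs with hLM
  · rw [sup_eq_right.2 hLM, hM]
    norm_num
  · have hsup : L ⊔ M = ⊤ :=
      (Subgroup.eq_or_eq_top_of_le_of_prime_index (hM ▸ Nat.prime_two) le_sup_right).resolve_left
        fun h => hLM (h ▸ le_sup_left)
    simp [hsup]

theorem tenNegOne_of_index_eq_two {M : Subgroup G} (hM : M.index = 2) :
    tenNegOne M = burnsideMark G M - 1 := by
  classical
  have := Subgroup.normal_of_index_eq_two hM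
  funext L
  simp only [Pi.sub_apply, Pi.one_apply, tenNegOne_apply_of_index_eq_two hM,
    burnsideMark_of_normal, hM]
  split_ifs <;> norm_num

theorem exists_ghost_eq_tenNegOne_of_index_eq_two {M : Subgroup G} (hM : M.index = 2) :
    ∃ u : (BurnsideRing G)ˣ, ghost u = tenNegOne M := by
  refine exists_ghost_eq_of_mul_self_eq_one ?_ (tenNegOne_mul_self M)
  rw [tenNegOne_of_index_eq_two hM]
  exact sub_mem (burnsideMark_mem_burnsideRing M) (one_mem _)

theorem tenNegOne_apply_of_index_eq_two_of_ne {M M₀ : Subgroup G} (hM : M.index = 2)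
    (hM₀ : M₀.index = 2) (hne : M₀ ≠ M) : tenNegOne M M₀ = -1 := by
  have hle : ¬M₀ ≤ M := fun h => hne ((Subgroup.eq_or_eq_top_of_le_of_prime_index
    (hM₀ ▸ Nat.prime_two) h).resolve_right (by simp [← Subgroup.index_eq_one, hM])).symm
  classical
  simp [tenNegOne_apply_of_index_eq_two hM, hle]

end Group

section CommGroup

variable {G : Type*} [CommGroup G]

theorem burnsideMark_mul_mem_closure (K : Subgroup G) {f : Subgroup G → ℤ}
    (hf : f ∈ AddSubgroup.closure (Set.range (burnsideMark G))) :
    burnsideMark G K * f ∈ AddSubgroup.closure (Set.range (burnsideMark G)) := by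
  induction hf using AddSubgroup.closure_induction with
  | mem _ hx =>
    obtain ⟨K', rfl⟩ := hx
    rw [burnsideMark_mul_of_normal]
    exact AddSubgroup.nsmul_mem _ (AddSubgroup.subset_closure (Set.mem_range_self _)) _
  | zero => simp
  | add _ _ _ _ hx hy => simpa [mul_add] using add_mem hx hy
  | neg _ _ hx => simpa using neg_mem hx

theorem mul_mem_closure_range_burnsideMark {f f' : Subgroup G → ℤ}
    (hf : f ∈ AddSubgroup.closure (Set.range (burnsideMark G)))
    (hf' : f' ∈ AddSubgroup.closure (Set.range (burnsideMark G))) :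
    f * f' ∈ AddSubgroup.closure (Set.range (burnsideMark G)) := by
  induction hf using AddSubgroup.closure_induction with
  | mem _ hx =>
    obtain ⟨K, rfl⟩ := hx
    exact burnsideMark_mul_mem_closure K hf'
  | zero => simp
  | add _ _ _ _ hx hy => simpa [add_mul] using add_mem hx hy
  | neg _ _ hx => simpa using neg_mem hx

theorem mem_closure_range_burnsideMark {f : Subgroup G → ℤ} (hf : f ∈ BurnsideRing G) :
    f ∈ AddSubgroup.closure (Set.range (burnsideMark G)) := by
  induction hf using Subring.closure_induction with
  | mem _ hx => exact AddSubgroup.subset_closure hx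
  | zero => exact zero_mem _
  | one => exact burnsideMark_top (G := G) ▸ AddSubgroup.subset_closure (Set.mem_range_self _)
  | add _ _ _ _ hx hy => exact add_mem hx hy
  | neg _ _ hx => exact neg_mem hx
  | mul _ _ _ _ hx hy => exact mul_mem_closure_range_burnsideMark hx hy

theorem natCard_dvd_sum_burnsideMark_zpowers_sup [Fintype G] (K L : Subgroup G) :
    (Nat.card G : ℤ) ∣ ∑ g : G, burnsideMark G K (Subgroup.zpowers g ⊔ L) := by
  classical
  simp only [burnsideMark_of_normal, sup_le_iff, Subgroup.zpowers_le]
  by_cases hLK : L ≤ K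
  · simp only [hLK, and_true, Finset.sum_ite, Finset.sum_const_zero, add_zero, Finset.sum_const,
      nsmul_eq_mul]
    rw [← Fintype.card_subtype, ← Nat.card_eq_fintype_card, ← Nat.cast_mul,
      Subgroup.card_mul_index]
  · simp [hLK]

theorem natCard_dvd_sum_apply_zpowers_sup [Fintype G] {f : Subgroup G → ℤ}
    (hf : f ∈ BurnsideRing G) (L : Subgroup G) :
    (Nat.card G : ℤ) ∣ ∑ g : G, f (Subgroup.zpowers g ⊔ L) := by
  replace hf := mem_closure_range_burnsideMark hf
  induction hf using AddSubgroup.closure_induction with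
  | mem _ hx =>
    obtain ⟨K, rfl⟩ := hx
    exact natCard_dvd_sum_burnsideMark_zpowers_sup K L
  | zero => simp
  | add _ _ _ _ hx hy => simpa [Finset.sum_add_distrib] using dvd_add hx hy
  | neg _ _ hx => simpa using hx

theorem index_dvd_two_of_apply_eq_neg_one [Fintype G] {f : Subgroup G → ℤ}
    (hf : f ∈ BurnsideRing G) {L : Subgroup G} (hL : f L = -1)
    (hgt : ∀ L', L < L' → f L' = 1) : L.index ∣ 2 := by
  classical
  have hterm : ∀ g : G, f (Subgroup.zpowers g ⊔ L) = 1 - 2 * if g ∈ L then 1 else 0 := by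
    intro g
    by_cases hg : g ∈ L
    · rw [sup_eq_right.2 (Subgroup.zpowers_le.2 hg), hL, if_pos hg]
      norm_num
    · rw [if_neg hg, hgt _ (lt_of_le_of_ne le_sup_right fun h => hg ?_), mul_zero, sub_zero]
      exact h ▸ Subgroup.mem_sup_left (Subgroup.mem_zpowers g)
  have hsum : ∑ g : G, f (Subgroup.zpowers g ⊔ L) = Nat.card G - Nat.card L * 2 := by
    simp only [hterm, Finset.sum_sub_distrib, ← Finset.mul_sum, Finset.sum_boole]
    simp [Nat.card_eq_fintype_card, Fintype.card_subtype, mul_comm]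
  have hdvd := natCard_dvd_sum_apply_zpowers_sup hf L
  rw [hsum, dvd_sub_self_left, ← L.card_mul_index, Nat.cast_mul,
    mul_dvd_mul_iff_left (by exact_mod_cast Nat.card_pos.ne')] at hdvd
  exact_mod_cast hdvd

theorem eq_one_of_apply_top_of_apply_index_eq_two [Finite G] {f : Subgroup G → ℤ}
    (hf : f ∈ BurnsideRing G) (hpm : ∀ L, f L = 1 ∨ f L = -1) (htop : f ⊤ = 1)
    (h2 : ∀ M : Subgroup G, M.index = 2 → f M = 1) : f = 1 := by
  have := Fintype.ofFinite G
  funext L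
  induction L using WellFoundedGT.induction with
  | _ L ih =>
  refine (hpm L).resolve_right fun hL => ?_
  rcases (Nat.dvd_prime Nat.prime_two).1 (index_dvd_two_of_apply_eq_neg_one hf hL ih) with h | h
  · rw [Subgroup.index_eq_one.1 h, htop] at hL
    norm_num at hL
  · rw [h2 L h] at hL
    norm_num at hL

theorem eq_one_of_ghost_top_of_ghost_index_eq_two [Finite G] {u : (BurnsideRing G)ˣ}
    (htop : ghost u ⊤ = 1) (h2 : ∀ M : Subgroup G, M.index = 2 → ghost u M = 1) : u = 1 :=
  ghost_injective (eq_one_of_apply_top_of_apply_index_eq_two (u : BurnsideRing G).2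
    (ghost_apply_eq_one_or_eq_neg_one u) htop h2)

theorem mem_of_ghost_top_eq_one [Finite G] {S : Subgroup (BurnsideRing G)ˣ} (hneg : -1 ∈ S)
    (hS : ∀ M : Subgroup G, M.index = 2 → ∃ u ∈ S, ghost u = tenNegOne M)
    {w : (BurnsideRing G)ˣ} (hw : ghost w ⊤ = 1) : w ∈ S := by
  classical
  have := Fintype.ofFinite (Subgroup G)
  choose! s hsS hs using hS
  set T := Finset.univ.filter fun M : Subgroup G => M.index = 2 ∧ ghost w M = -1
  have hT : ∀ M ∈ T, M.index = 2 := fun M hM => (Finset.mem_filter.1 hM).2.1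
  suffices w * ∏ M ∈ T, -s M = 1 by
    rw [mul_eq_one_iff_eq_inv.1 this]
    refine inv_mem (prod_mem fun M hM => ?_)
    rw [← neg_one_mul]
    exact mul_mem hneg (hsS M (hT M hM))
  apply eq_one_of_ghost_top_of_ghost_index_eq_two
  · rw [ghost_mul, ghost_prod, Pi.mul_apply, Finset.prod_apply, hw, one_mul]
    refine Finset.prod_eq_one fun M hM => ?_
    rw [ghost_neg, hs M (hT M hM), Pi.neg_apply, tenNegOne_apply_top,
      neg_neg]
  · intro M₀ hM₀
    have hfactor : ∀ M ∈ T, ghost (-s M) M₀ = if M₀ = M then -1 else 1 := by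
      intro M hM
      rw [ghost_neg, hs M (hT M hM), Pi.neg_apply]
      split_ifs with h
      · rw [h, tenNegOne_apply_of_index_eq_two (hT M hM), if_pos le_rfl]
      · rw [tenNegOne_apply_of_index_eq_two_of_ne (hT M hM) hM₀ h, neg_neg]
    rw [ghost_mul, ghost_prod, Pi.mul_apply, Finset.prod_apply, Finset.prod_congr rfl hfactor,
      Finset.prod_ite_eq]
    by_cases hM₀T : M₀ ∈ T
    · rw [if_pos hM₀T, (Finset.mem_filter.1 hM₀T).2.2]
      norm_num
    · rw [if_neg hM₀T, mul_one]
      exact (ghost_apply_eq_one_or_eq_neg_one w M₀).resolve_right fun h =>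
        hM₀T (Finset.mem_filter.2 ⟨Finset.mem_univ _, hM₀, h⟩)

theorem eq_top_of_neg_one_mem_of_tenNegOne_mem [Finite G] {S : Subgroup (BurnsideRing G)ˣ}
    (hneg : -1 ∈ S)
    (hS : ∀ M : Subgroup G, M.index = 2 → ∃ u ∈ S, ghost u = tenNegOne M) : S = ⊤ := by
  rw [eq_top_iff]
  rintro v -
  rcases ghost_apply_eq_one_or_eq_neg_one v ⊤ with h | h
  · exact mem_of_ghost_top_eq_one hneg hS h
  · rw [← neg_neg v, ← neg_one_mul]
    refine mul_mem hneg (mem_of_ghost_top_eq_one hneg hS ?_)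
    rw [ghost_neg, Pi.neg_apply, h, neg_neg]

end CommGroup

/-- The unit group of the Burnside ring of a finite abelian group is generated by
the tensor inductions `Ten^G_H(-1)` for `H ≤ G`. -/
theorem burnside_units_abelian_generated_by_ten (G : Type*) [CommGroup G] [Finite G] :
    Subgroup.closure
      {v : (BurnsideRing G)ˣ | ∃ H : Subgroup G, ghost v = tenNegOne H} = ⊤ := by
  refine eq_top_of_neg_one_mem_of_tenNegOne_mem
    (Subgroup.subset_closure ⟨⊤, by rw [ghost_neg, tenNegOne_top]; rfl⟩) fun M hM => ?_
  obtain ⟨u, hu⟩ := exists_ghost_eq_tenNegOne_of_index_eq_two hM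
  exact ⟨u, Subgroup.subset_closure ⟨M, hu⟩, hu⟩
end

section
/- Let p be an odd prime and G = D₂ₚ the dihedral group of order 2p, with I = ⟨x⟩ a reflection subgroup. Then the number of (I,I)-double cosets in G equals 1 + (p−1)/2, and the unit Ten^G_I(−1) has marks: |Ten^G_I(−1)^1| = −1, |Ten^G_I(−1)^I| = (−1)^{1+(p−1)/2}, |Ten^G_I(−1)^{Cₚ}| = −1, |Ten^G_I(−1)^G| = −1. -/
open Pointwise

/-!
The marks at `1` and at `I` count double cosets directly: `1 \ G / I = G / I` has `p` elements,
and `I \ G / I` is the set of rotations `r i` up to `i ↦ -i`, represented by the residues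
`0, 1, …, p / 2`. The marks at `Cₚ` and `G` are `-1` because there `L * I = G`, so there is a
single double coset.
-/

section DoubleCosetCount

variable {G : Type*} [Group G]

theorem Subgroup.mem_zpowers_iff_of_mul_self_eq_one {x g : G} (hx : x * x = 1) :
    g ∈ Subgroup.zpowers x ↔ g = 1 ∨ g = x := by
  constructor
  · rw [Subgroup.mem_zpowers_iff]
    rintro ⟨k, rfl⟩
    have hx2 : x ^ (2 : ℤ) = 1 := by rw [zpow_two, hx]
    rw [← Int.emod_add_mul_ediv k 2, zpow_add, zpow_mul, hx2, one_zpow, mul_one]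
    rcases Int.emod_two_eq_zero_or_one k with h | h <;> simp [h]
  · rintro (rfl | rfl)
    exacts [one_mem _, Subgroup.mem_zpowers _]

theorem DoubleCoset.card_quotient_bot_left (H : Subgroup G) :
    Nat.card (DoubleCoset.Quotient ((⊥ : Subgroup G) : Set G) H) = H.index := by
  rw [DoubleCoset.left_bot_eq_left_quot]
  rfl

theorem DoubleCoset.card_quotient_eq_one_of_mul_eq_univ {H K : Subgroup G}
    (h : (H : Set G) * (K : Set G) = Set.univ) :
    Nat.card (DoubleCoset.Quotient (H : Set G) K) = 1 := by
  have hmk : ∀ q : DoubleCoset.Quotient (H : Set G) K, q = DoubleCoset.mk H K 1 := by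
    intro q
    obtain ⟨g, rfl⟩ := Quotient.mk''_surjective q
    obtain ⟨a, ha, b, hb, rfl⟩ := Set.mem_mul.1 (h ▸ Set.mem_univ g)
    exact (DoubleCoset.eq H K _ _).2 ⟨a⁻¹, inv_mem ha, b⁻¹, inv_mem hb, by group⟩
  exact Nat.card_eq_one_iff_unique.2
    ⟨⟨fun q q' => (hmk q).trans (hmk q').symm⟩, inferInstance⟩

theorem tenNegOne_bot (H : Subgroup G) : tenNegOne H ⊥ = (-1) ^ H.index := by
  rw [tenNegOne, DoubleCoset.card_quotient_bot_left]

theorem tenNegOne_eq_neg_one_of_mul_eq_univ {H L : Subgroup G}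
    (h : (L : Set G) * (H : Set G) = Set.univ) : tenNegOne H L = -1 := by
  rw [tenNegOne, DoubleCoset.card_quotient_eq_one_of_mul_eq_univ h, pow_one]

end DoubleCosetCount

namespace DihedralGroup

variable {n : ℕ}

theorem mem_zpowers_sr_iff {i : ZMod n} {g : DihedralGroup n} :
    g ∈ Subgroup.zpowers (sr i) ↔ g = 1 ∨ g = sr i :=
  Subgroup.mem_zpowers_iff_of_mul_self_eq_one (sr_mul_self i)

theorem r_mem_zpowers_r_one (i : ZMod n) : r i ∈ Subgroup.zpowers (r (1 : ZMod n)) :=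
  ⟨(i.cast : ℤ), by simp only [r_one_zpow, ZMod.intCast_zmod_cast]⟩

theorem index_zpowers_sr (i : ZMod n) : (Subgroup.zpowers (sr i)).index = n := by
  have h := (Subgroup.zpowers (sr i)).card_mul_index
  rw [Nat.card_zpowers, orderOf_sr, nat_card] at h
  omega

theorem zpowers_r_one_mul_zpowers_sr (j : ZMod n) :
    (Subgroup.zpowers (r (1 : ZMod n)) : Set (DihedralGroup n)) *
      (Subgroup.zpowers (sr j) : Set (DihedralGroup n)) =
      Set.univ := by
  refine Set.eq_univ_of_forall fun g => Set.mem_mul.2 ?_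
  rcases g with i | i
  · exact ⟨r i, r_mem_zpowers_r_one i, 1, one_mem _, mul_one _⟩
  · exact ⟨r (j - i), r_mem_zpowers_r_one _, sr j, Subgroup.mem_zpowers _, by
      rw [r_mul_sr, sub_sub_cancel]⟩

theorem mk_sr_eq_mk_r (i : ZMod n) :
    DoubleCoset.mk (Subgroup.zpowers (sr 0)) (Subgroup.zpowers (sr 0)) (sr i) =
      DoubleCoset.mk (Subgroup.zpowers (sr 0)) (Subgroup.zpowers (sr 0)) (r i) :=
  (DoubleCoset.eq _ _ _ _).2 ⟨sr 0, Subgroup.mem_zpowers _, 1, one_mem _, by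
    rw [mul_one, sr_mul_sr, sub_zero]⟩

theorem mk_r_eq_mk_r_iff (i j : ZMod n) :
    DoubleCoset.mk (Subgroup.zpowers (sr 0)) (Subgroup.zpowers (sr 0)) (r i) =
        DoubleCoset.mk (Subgroup.zpowers (sr 0)) (Subgroup.zpowers (sr 0)) (r j) ↔
      i = j ∨ i = -j := by
  rw [DoubleCoset.eq]
  constructor
  · rintro ⟨a, ha, b, hb, h⟩
    rcases mem_zpowers_sr_iff.1 ha with rfl | rfl <;>
      rcases mem_zpowers_sr_iff.1 hb with rfl | rfl <;>
      simp only [one_mul, mul_one, sr_mul_r, r_mul_sr, sr_mul_sr, r.injEq, reduceCtorEq] at h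
    · exact Or.inl h.symm
    · exact Or.inr (by rw [h]; ring)
  · rintro (rfl | rfl)
    · exact ⟨1, one_mem _, 1, one_mem _, by group⟩
    · exact ⟨sr 0, Subgroup.mem_zpowers _, sr 0, Subgroup.mem_zpowers _, by
        rw [sr_mul_r, sr_mul_sr]; ring_nf⟩

theorem mk_r_eq_mk_r_iff_natAbs_valMinAbs (i j : ZMod n) :
    DoubleCoset.mk (Subgroup.zpowers (sr 0)) (Subgroup.zpowers (sr 0)) (r i) =
        DoubleCoset.mk (Subgroup.zpowers (sr 0)) (Subgroup.zpowers (sr 0)) (r j) ↔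
      i.valMinAbs.natAbs = j.valMinAbs.natAbs := by
  rw [mk_r_eq_mk_r_iff, ZMod.natAbs_valMinAbs_eq_natAbs_valMinAbs]

theorem card_doubleCoset_quotient_zpowers_sr_zero [NeZero n] :
    Nat.card (DoubleCoset.Quotient
        ((Subgroup.zpowers (sr (0 : ZMod n)) : Subgroup (DihedralGroup n)) : Set (DihedralGroup n))
        ((Subgroup.zpowers (sr (0 : ZMod n)) : Subgroup (DihedralGroup n)) : Set (DihedralGroup n)))
      = n / 2 + 1 := by
  set f : Fin (n / 2 + 1) → DoubleCoset.Quotient _ _ := fun k =>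
    DoubleCoset.mk (Subgroup.zpowers (sr 0)) (Subgroup.zpowers (sr 0)) (r ((k : ℕ) : ZMod n))
  have hrep (k : Fin (n / 2 + 1)) : ((k : ℕ) : ZMod n).valMinAbs.natAbs = k := by
    rw [ZMod.valMinAbs_natCast_of_le_half (Nat.lt_succ_iff.1 k.2), Int.natAbs_natCast]
  have hmk_r_mem_range (i : ZMod n) : ∃ k, f k =
      DoubleCoset.mk (Subgroup.zpowers (sr 0)) (Subgroup.zpowers (sr 0)) (r i) :=
    ⟨⟨i.valMinAbs.natAbs, Nat.lt_succ_of_le (ZMod.natAbs_valMinAbs_le i)⟩, by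
      rw [mk_r_eq_mk_r_iff_natAbs_valMinAbs, hrep]⟩
  have hf : f.Bijective := by
    refine ⟨fun k l h => Fin.ext ?_, fun q => ?_⟩
    · rwa [mk_r_eq_mk_r_iff_natAbs_valMinAbs, hrep, hrep] at h
    · obtain ⟨g | i, rfl⟩ := Quotient.mk''_surjective q
      · exact hmk_r_mem_range g
      · rw [← DoubleCoset.mk, mk_sr_eq_mk_r]
        exact hmk_r_mem_range i
  rw [← Nat.card_eq_of_bijective f hf, Nat.card_eq_fintype_card, Fintype.card_fin]

end DihedralGroup

theorem tenNegOne_marks_dihedral_general (p : ℕ) (hodd : Odd p) :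
    Nat.card (DoubleCoset.Quotient
        ((Subgroup.zpowers (DihedralGroup.sr (0 : ZMod p)) : Subgroup (DihedralGroup p)) : Set (DihedralGroup p))
        ((Subgroup.zpowers (DihedralGroup.sr (0 : ZMod p)) : Subgroup (DihedralGroup p)) : Set (DihedralGroup p)))
      = 1 + (p - 1) / 2 ∧
    tenNegOne (Subgroup.zpowers (DihedralGroup.sr (0 : ZMod p))) (⊥ : Subgroup (DihedralGroup p)) = -1 ∧
    tenNegOne (Subgroup.zpowers (DihedralGroup.sr (0 : ZMod p)))
        (Subgroup.zpowers (DihedralGroup.sr (0 : ZMod p))) = (-1) ^ (1 + (p - 1) / 2) ∧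
    tenNegOne (Subgroup.zpowers (DihedralGroup.sr (0 : ZMod p)))
        (Subgroup.zpowers (DihedralGroup.r (1 : ZMod p))) = -1 ∧
    tenNegOne (Subgroup.zpowers (DihedralGroup.sr (0 : ZMod p)))
        (⊤ : Subgroup (DihedralGroup p)) = -1 := by
  have : NeZero p := ⟨hodd.pos.ne'⟩
  have hII := DihedralGroup.card_doubleCoset_quotient_zpowers_sr_zero (n := p)
  rw [show p / 2 + 1 = 1 + (p - 1) / 2 by have := Nat.odd_iff.1 hodd; omega] at hII
  refine ⟨hII, ?_, by rw [tenNegOne, hII], ?_, ?_⟩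
  · rw [tenNegOne_bot, DihedralGroup.index_zpowers_sr, hodd.neg_one_pow]
  · exact tenNegOne_eq_neg_one_of_mul_eq_univ
      (DihedralGroup.zpowers_r_one_mul_zpowers_sr (0 : ZMod p))
  · exact tenNegOne_eq_neg_one_of_mul_eq_univ
      (Set.univ_mul ⟨1, one_mem (Subgroup.zpowers (DihedralGroup.sr (0 : ZMod p)))⟩)

/-- In the dihedral group `G = D₂ₚ` (`p` an odd prime) with reflection subgroup
`I = ⟨x⟩`: the number of `(I,I)`-double cosets is `1 + (p-1)/2`, and the marks of
the tensor induction `Ten^G_I(-1)` are `-1` at the trivial subgroup, 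
`(-1) ^ (1 + (p-1)/2)` at `I`, `-1` at `Cₚ`, and `-1` at `G`. -/
theorem tenNegOne_marks_dihedral (p : ℕ) (hp : p.Prime) (hodd : Odd p) :
    Nat.card (DoubleCoset.Quotient
        ((Subgroup.zpowers (DihedralGroup.sr (0 : ZMod p)) : Subgroup (DihedralGroup p)) : Set (DihedralGroup p))
        ((Subgroup.zpowers (DihedralGroup.sr (0 : ZMod p)) : Subgroup (DihedralGroup p)) : Set (DihedralGroup p)))
      = 1 + (p - 1) / 2 ∧
    tenNegOne (Subgroup.zpowers (DihedralGroup.sr (0 : ZMod p))) (⊥ : Subgroup (DihedralGroup p)) = -1 ∧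
    tenNegOne (Subgroup.zpowers (DihedralGroup.sr (0 : ZMod p)))
        (Subgroup.zpowers (DihedralGroup.sr (0 : ZMod p))) = (-1) ^ (1 + (p - 1) / 2) ∧
    tenNegOne (Subgroup.zpowers (DihedralGroup.sr (0 : ZMod p)))
        (Subgroup.zpowers (DihedralGroup.r (1 : ZMod p))) = -1 ∧
    tenNegOne (Subgroup.zpowers (DihedralGroup.sr (0 : ZMod p)))
        (⊤ : Subgroup (DihedralGroup p)) = -1 :=
  tenNegOne_marks_dihedral_general p hodd
end

section
/- For every positive integer n, there are only countably many subsets of ℕⁿ that are downward closed under the componentwise (product) partial order. -/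
/-!
By Dickson's lemma `ℕⁿ` is well-quasi-ordered. In a well-quasi-order a lower set is the
complement of the upper closure of the minimal elements of its complement, and these minimal
elements form an antichain, hence a finite set. So lower sets inject into the finite subsets of
a countable type, of which there are countably many.
-/

section

variable {α : Type*} [PartialOrder α]

theorem IsLowerSet.eq_compl_upperClosure_minimal_compl [WellFoundedLT α] {s : Set α}
    (hs : IsLowerSet s) : s = (upperClosure {x | Minimal (· ∉ s) x} : Set α)ᶜ := by
  ext x
  simp only [Set.mem_compl_iff, SetLike.mem_coe, mem_upperClosure, Set.mem_ofPred_eq, not_exists,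
    not_and]
  refine ⟨fun hx m hm hmx => hm.prop (hs hmx hx), fun hx => ?_⟩
  by_contra hxs
  obtain ⟨m, hmx, hm⟩ := exists_minimal_le_of_wellFoundedLT (· ∉ s) x hxs
  exact hx m hm hmx

theorem Set.countable_setOf_isLowerSet [Countable α] [WellQuasiOrderedLE α] :
    {s : Set α | IsLowerSet s}.Countable := by
  let minimalsCompl (s : Set α) : Set α := {x | Minimal (· ∉ s) x}
  have hinj : Set.InjOn minimalsCompl {s | IsLowerSet s} := fun s hs t ht hst => by
    rw [hs.eq_compl_upperClosure_minimal_compl, ht.eq_compl_upperClosure_minimal_compl]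
    exact congrArg (fun M => (upperClosure M : Set α)ᶜ) hst
  refine Set.countable_of_injective_of_countable_image hinj
    ((Set.countable_ofPred_finite_subset Set.countable_univ).mono ?_)
  rintro _ ⟨s, -, rfl⟩
  exact ⟨WellQuasiOrderedLE.finite_of_isAntichain (setOfPred_minimal_antichain _),
    Set.subset_univ _⟩

end

theorem countable_downward_closed_subsets_general (n : ℕ) :
    Set.Countable {I : Set (Fin n → ℕ) |
      ∀ a ∈ I, ∀ b : Fin n → ℕ, (∀ i, b i ≤ a i) → b ∈ I} := by
  convert Set.countable_setOf_isLowerSet (α := Fin n → ℕ) using 3 with I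
  exact ⟨fun h a b hba ha => h a ha b hba, fun h a ha b hba => h hba ha⟩

/-- For every positive integer `n`, there are only countably many subsets of
`ℕⁿ` that are downward closed under the componentwise partial order. -/
theorem countable_downward_closed_subsets (n : ℕ) (hn : 0 < n) :
    Set.Countable {I : Set (Fin n → ℕ) |
      ∀ a ∈ I, ∀ b : Fin n → ℕ, (∀ i, b i ≤ a i) → b ∈ I} :=
  countable_downward_closed_subsets_general n
end

section
/- For a positive integer x, Euler's totient φ(x) is congruent to 2 modulo 4 if and only if x = 4, or x is a power pᵏ (k ≥ 1) of a prime p ≡ 3 (mod 4), or x is twice such a prime power. -/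
/-!
Two coprime factors of `x` that both exceed `2` have even totients, so their product
contributes a factor `4` to `φ x`. Hence if `φ x ≡ 2 (mod 4)`, writing `x = 2 ^ a * m`
with `m` odd, either `m = 1` and `x = 2 ^ a` with `φ x = 2 ^ (a - 1)`, forcing `a = 2`,
or `a ≤ 1` and the odd part `m` cannot split into two coprime factors, so it is a prime
power `p ^ k`; then `φ x = p ^ (k - 1) * (p - 1)` with `p ^ (k - 1)` odd, which is
`≡ 2 (mod 4)` exactly when `p ≡ 3 (mod 4)`.
-/

open Pointwise

namespace Nat

theorem four_dvd_totient_mul {a b : ℕ} (h : a.Coprime b) (ha : 2 < a) (hb : 2 < b) :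
    4 ∣ φ (a * b) := by
  rw [totient_mul h]
  exact mul_dvd_mul (totient_even ha).two_dvd (totient_even hb).two_dvd

theorem mul_mod_four_eq_two_iff_of_odd {a b : ℕ} (ha : Odd a) :
    a * b % 4 = 2 ↔ b % 4 = 2 := by
  have ha4 : a % 4 = 1 ∨ a % 4 = 3 := by rcases ha with ⟨c, rfl⟩; omega
  rw [mul_mod]
  have hb4 : b % 4 < 4 := mod_lt _ (by norm_num)
  rcases ha4 with ha4 | ha4 <;> rw [ha4] <;> interval_cases b % 4 <;> simp

theorem four_dvd_totient_two_pow_mul {a m : ℕ} (ha : 2 ≤ a) (hm : Odd m) (hm1 : m ≠ 1) :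
    4 ∣ φ (2 ^ a * m) := by
  refine four_dvd_totient_mul ((coprime_two_left.2 hm).pow_left a) ?_ ?_
  · have := Nat.pow_le_pow_right two_pos ha
    omega
  · rcases hm with ⟨c, rfl⟩
    omega

theorem totient_two_pow_mod_four_eq_two_iff (a : ℕ) : φ (2 ^ a) % 4 = 2 ↔ a = 2 := by
  match a with
  | 0 | 1 | 2 => decide
  | n + 3 =>
    rw [totient_prime_pow_succ prime_two, pow_succ, pow_succ]
    omega

theorem totient_prime_pow_mod_four_eq_two_iff {p k : ℕ} (hp : p.Prime) (hp2 : p ≠ 2)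
    (hk : 1 ≤ k) : φ (p ^ k) % 4 = 2 ↔ p % 4 = 3 := by
  obtain ⟨j, rfl⟩ := Nat.exists_eq_add_of_le' hk
  have hp_odd : Odd p := hp.odd_of_ne_two hp2
  rw [totient_prime_pow_succ hp, mul_mod_four_eq_two_iff_of_odd hp_odd.pow]
  rcases hp_odd with ⟨c, rfl⟩
  omega

theorem eq_prime_pow_of_odd_of_not_four_dvd_totient {n : ℕ} (hn : Odd n) (h1 : n ≠ 1)
    (h : ¬ 4 ∣ φ n) : ∃ p k, p.Prime ∧ 1 ≤ k ∧ n = p ^ k := by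
  obtain ⟨p, hp, hpn⟩ := exists_prime_and_dvd h1
  obtain ⟨k, m, hpm, rfl⟩ := exists_eq_pow_mul_and_not_dvd hn.pos.ne' p hp.ne_one
  have hk : k ≠ 0 := by
    rintro rfl
    exact hpm (by simpa using hpn)
  have hm : m = 1 := by
    by_contra hm
    obtain ⟨⟨c, hc⟩, ⟨d, rfl⟩⟩ := odd_mul.mp hn
    -- both coprime factors are odd and different from `1`, hence exceed `2`
    refine h (four_dvd_totient_mul ((hp.coprime_iff_not_dvd.2 hpm).pow_left k) ?_ (by omega))
    have := one_lt_pow hk hp.one_lt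
    omega
  exact ⟨p, k, hp, one_le_iff_ne_zero.2 hk, by rw [hm, mul_one]⟩

theorem totient_mod_four_eq_two_iff_of_odd {n : ℕ} (hn : Odd n) :
    φ n % 4 = 2 ↔ ∃ p k, p.Prime ∧ p % 4 = 3 ∧ 1 ≤ k ∧ n = p ^ k := by
  constructor
  · intro h
    have h1 : n ≠ 1 := by rintro rfl; simp at h
    obtain ⟨p, k, hp, hk, rfl⟩ := eq_prime_pow_of_odd_of_not_four_dvd_totient hn h1 (by omega)
    have hp2 : p ≠ 2 := by
      rintro rfl
      exact not_even_iff_odd.2 hn (even_two.pow_of_ne_zero (by omega))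
    exact ⟨p, k, hp, (totient_prime_pow_mod_four_eq_two_iff hp hp2 hk).1 h, hk, rfl⟩
  · rintro ⟨p, k, hp, hp3, hk, rfl⟩
    exact (totient_prime_pow_mod_four_eq_two_iff hp (by omega) hk).2 hp3

end Nat

theorem totient_mod_four_eq_two_iff_general (x : ℕ) :
    Nat.totient x % 4 = 2 ↔
      x = 4 ∨ ∃ p k : ℕ, p.Prime ∧ p % 4 = 3 ∧ 1 ≤ k ∧
        (x = p ^ k ∨ x = 2 * p ^ k) := by
  constructor
  · intro h
    have hx : x ≠ 0 := by rintro rfl; simp at h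
    obtain ⟨a, m, hm, rfl⟩ := Nat.exists_eq_two_pow_mul_odd hx
    rcases eq_or_ne m 1 with rfl | hm1
    · rw [mul_one] at h
      simp [(Nat.totient_two_pow_mod_four_eq_two_iff a).1 h]
    have ha : a ≤ 1 := by
      by_contra! ha
      have := Nat.four_dvd_totient_two_pow_mul ha hm hm1
      omega
    have hφ : Nat.totient (2 ^ a * m) = Nat.totient m := by
      interval_cases a
      · simp
      · simpa using Nat.totient_two_mul_of_odd hm
    obtain ⟨p, k, hp, hp3, hk, rfl⟩ := (Nat.totient_mod_four_eq_two_iff_of_odd hm).1 (hφ ▸ h)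
    refine .inr ⟨p, k, hp, hp3, hk, ?_⟩
    interval_cases a <;> simp
  · rintro (rfl | ⟨p, k, hp, hp3, hk, rfl | rfl⟩)
    · decide
    · exact (Nat.totient_prime_pow_mod_four_eq_two_iff hp (by omega) hk).2 hp3
    · have hp_odd : Odd p := hp.odd_of_ne_two (by omega)
      rw [Nat.totient_two_mul_of_odd hp_odd.pow]
      exact (Nat.totient_prime_pow_mod_four_eq_two_iff hp (by omega) hk).2 hp3

/-- `φ(x) ≡ 2 (mod 4)` iff `x = 4`, or `x` is a power `p ^ k` (`k ≥ 1`) of a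
prime `p ≡ 3 (mod 4)`, or `x` is twice such a prime power. -/
theorem totient_mod_four_eq_two_iff (x : ℕ) (hx : 0 < x) :
    Nat.totient x % 4 = 2 ↔
      x = 4 ∨ ∃ p k : ℕ, p.Prime ∧ p % 4 = 3 ∧ 1 ≤ k ∧
        (x = p ^ k ∨ x = 2 * p ^ k) :=
  totient_mod_four_eq_two_iff_general x
end

section
/- Let n ≥ 3 and define s(n) to be the 𝔽₂-dimension of S_{1,𝔽₂}(D₂ₙ), which equals m + 2 if n is odd and m + 4 if n is even, where m is the number of positive divisors d of n with φ(d) ≡ 2 (mod 4). Then the exponential map ε_{D₂ₙ} : B(D₂ₙ) → B^×(D₂ₙ), [G/H] ↦ Ten^G_H(−1), is surjective if and only if φ(n) ≡ 2 (mod 4). Equivalently (since the image of ε_{D₂ₙ} has 𝔽₂-dimension s(n) and dim B^×(D₂ₙ) = d(n)+1 for n odd, d(n)+2 for n even), the equality s(n) = dim_{𝔽₂} B^×(D₂ₙ) holds iff φ(n) ≡ 2 (mod 4). In purely arithmetic form: for n ≥ 3, the number of divisors d of n with φ(d) ≡ 2 (mod 4) equals d(n) − 1 if n is odd (resp. d(n)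 − 2 if n is even) if and only if φ(n) ≡ 2 (mod 4). -/
/-!
Divisors `d ≤ 2` have `φ d = 1`, while every divisor `d > 2` has `φ d` even and dividing `φ n`.
So the divisors counted are exactly the divisors `d > 2` (there are `d(n) - 1`, resp. `d(n) - 2`
of them) as soon as `φ n ≡ 2 (mod 4)`; conversely, if all divisors `d > 2` are counted, so is `n`.
-/

namespace Nat

open Finset

theorem totient_mod_four_eq_two_of_dvd {d n : ℕ} (hd : d ∣ n) (h2d : 2 < d)
    (hn : totient n % 4 = 2) : totient d % 4 = 2 := by
  have heven : 2 ∣ totient d := even_iff_two_dvd.mp (totient_even h2d)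
  have hnot4 : ¬ 4 ∣ totient d := fun h4 => by
    obtain ⟨c, hc⟩ := h4.trans (totient_dvd_of_dvd hd)
    omega
  omega

theorem two_lt_of_totient_mod_four_eq_two {d : ℕ} (h : totient d % 4 = 2) : 2 < d := by
  by_contra! hd
  interval_cases d <;> simp at h

theorem filter_divisors_le_two {n : ℕ} (hn : n ≠ 0) :
    n.divisors.filter (· ≤ 2) = if n % 2 = 1 then {1} else {1, 2} := by
  ext d
  simp only [mem_filter, mem_divisors]
  constructor
  · rintro ⟨⟨hdn, -⟩, hd2⟩
    have hd0 : d ≠ 0 := by rintro rfl; exact hn (zero_dvd_iff.mp hdn)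
    obtain rfl | rfl : d = 1 ∨ d = 2 := by omega
    · split_ifs <;> simp
    · have : n % 2 = 0 := mod_eq_zero_of_dvd hdn
      simp [this]
  · split_ifs
    · simp only [mem_singleton]
      rintro rfl
      exact ⟨⟨one_dvd n, hn⟩, by omega⟩
    · simp only [mem_insert, mem_singleton]
      rintro (rfl | rfl)
      · exact ⟨⟨one_dvd n, hn⟩, by omega⟩
      · exact ⟨⟨dvd_of_mod_eq_zero (by omega), hn⟩, le_rfl⟩

theorem card_filter_divisors_two_lt {n : ℕ} (hn : n ≠ 0) :
    (n.divisors.filter (2 < ·)).card =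
      if n % 2 = 1 then n.divisors.card - 1 else n.divisors.card - 2 := by
  have hsplit := card_filter_add_card_filter_not (s := n.divisors) (p := (2 < ·))
  simp only [not_lt, filter_divisors_le_two hn] at hsplit
  split_ifs at hsplit ⊢ <;> simp at hsplit <;> omega

theorem filter_divisors_totient_mod_four_eq_two_eq_iff {n : ℕ} (hn : 2 < n) :
    n.divisors.filter (fun d => totient d % 4 = 2) = n.divisors.filter (2 < ·) ↔
      totient n % 4 = 2 := by
  constructor
  · intro h
    have hmem : n ∈ n.divisors.filter (2 < ·) := mem_filter.2 ⟨mem_divisors_self n (by omega), hn⟩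
    rw [← h] at hmem
    exact (mem_filter.1 hmem).2
  · intro h
    refine filter_congr fun d hd => ⟨two_lt_of_totient_mod_four_eq_two, fun h2d => ?_⟩
    exact totient_mod_four_eq_two_of_dvd (dvd_of_mem_divisors hd) h2d h

end Nat

/-- Arithmetic form of the surjectivity criterion for the exponential map
`ε_{D₂ₙ} : B(D₂ₙ) → B^×(D₂ₙ)`: for `n ≥ 3`, the number `m` of divisors `d` of
`n` with `φ(d) ≡ 2 (mod 4)` satisfies `m = d(n) - 1` (`n` odd), resp.
`m = d(n) - 2` (`n` even), if and only if `φ(n) ≡ 2 (mod 4)`. -/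
theorem exponential_surjective_dihedral_iff (n : ℕ) (hn : 3 ≤ n) :
    ((n.divisors.filter (fun d => Nat.totient d % 4 = 2)).card =
        if n % 2 = 1 then n.divisors.card - 1 else n.divisors.card - 2) ↔
      Nat.totient n % 4 = 2 := by
  have hsub : n.divisors.filter (fun d => Nat.totient d % 4 = 2) ⊆ n.divisors.filter (2 < ·) :=
    Finset.monotone_filter_right _ fun _ _ => Nat.two_lt_of_totient_mod_four_eq_two
  rw [← Nat.card_filter_divisors_two_lt (by omega),
    ← Nat.filter_divisors_totient_mod_four_eq_two_eq_iff hn]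
  exact ⟨fun h => Finset.eq_of_subset_of_card_le hsub h.ge, congrArg Finset.card⟩
end
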